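/- arXiv:1403.4571 — 9 statements merged into one kernel-verified Lean document; each statement's English description precedes it below -/
import Mathlib

section
/- Let n ≥ 1 and let B, A_0, A_1, ..., A_n be nonzero pairwise distinct complex numbers. Then (B/(B-A_0))^2 · ∏_{j=1}^n B/(B-A_j) = ∑_{i=1}^n (A_i/(A_i-A_0))^2 · (∏_{1≤j≤n, j≠i} A_i/(A_i-A_j)) · B/(B-A_i) + (∏_{i=1}^n A_0/(A_0-A_i)) · [ (B/(B-A_0))^2 + (∑_{l=1}^n A_l/(A_l-A_0)) · B/(B-A_0) ]. -/
/-!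
Writing `t = 1 / B`, each factor `B / (B - a)` is `1 / (1 - a t)`, so the identity is the
partial fraction decomposition of `1 / ((1 - A₀ t) ^ 2 ∏ⱼ (1 - Aⱼ t))` in `t`. It is proved
by induction on the set of simple poles: multiplying the decomposition by one more factor
`B / (B - a)` and splitting every product of two simple factors by the two-pole identity
`div_sub_mul_div_sub` gives the new decomposition, except that the coefficient of the new pole
`a` comes out as a sum; that sum is the old decomposition evaluated at `B = a`.
-/

open Finset

section PartialFractions

variable {K : Type*} [Field K]

theorem div_sub_mul_div_sub {B x y : K} (hBx : B ≠ x) (hBy : B ≠ y) (hxy : x ≠ y) :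
    B / (B - x) * (B / (B - y)) = x / (x - y) * (B / (B - x)) + y / (y - x) * (B / (B - y)) := by
  have hBx' : B - x ≠ 0 := sub_ne_zero.mpr hBx
  have hBy' : B - y ≠ 0 := sub_ne_zero.mpr hBy
  have hxy' : x - y ≠ 0 := sub_ne_zero.mpr hxy
  rw [← neg_sub x y, div_neg]
  field_simp
  ring

theorem div_sub_sq_mul_div_sub {B x y : K} (hBx : B ≠ x) (hBy : B ≠ y) (hxy : x ≠ y) :
    (B / (B - x)) ^ 2 * (B / (B - y))
      = (y / (y - x)) ^ 2 * (B / (B - y))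
        + x / (x - y) * ((B / (B - x)) ^ 2 + y / (y - x) * (B / (B - x))) := by
  linear_combination (B / (B - x) + y / (y - x)) * div_sub_mul_div_sub hBx hBy hxy

theorem div_sub_mul_sum_mul_div_sub {ι : Type*} (s : Finset ι) (c A : ι → K) {B x : K}
    (hBx : B ≠ x) (hBA : ∀ i ∈ s, B ≠ A i) (hxA : ∀ i ∈ s, x ≠ A i) :
    B / (B - x) * ∑ i ∈ s, c i * (B / (B - A i))
      = (∑ i ∈ s, c i * (x / (x - A i))) * (B / (B - x))
        + ∑ i ∈ s, c i * (A i / (A i - x)) * (B / (B - A i)) := by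
  rw [mul_sum, sum_mul, ← sum_add_distrib]
  refine sum_congr rfl fun i hi => ?_
  linear_combination c i * div_sub_mul_div_sub hBx (hBA i hi) (hxA i hi)

theorem div_sub_sq_mul_prod_div_sub {ι : Type*} [DecidableEq ι] (s : Finset ι) (A : ι → K)
    {b : K} (hbA : ∀ i ∈ s, b ≠ A i) (hA : Set.InjOn A s) {B : K} (hBb : B ≠ b)
    (hBA : ∀ i ∈ s, B ≠ A i) :
    (B / (B - b)) ^ 2 * ∏ j ∈ s, B / (B - A j)
      = (∑ i ∈ s, (A i / (A i - b)) ^ 2 *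
          (∏ j ∈ s.erase i, A i / (A i - A j)) * (B / (B - A i)))
        + (∏ i ∈ s, b / (b - A i)) *
          ((B / (B - b)) ^ 2 + (∑ l ∈ s, A l / (A l - b)) * (B / (B - b))) := by
  induction s using Finset.induction_on generalizing B with
  | empty => simp
  | @insert a s ha ih =>
    simp only [mem_insert, forall_eq_or_imp] at hbA hBA
    rw [coe_insert, Set.injOn_insert (mod_cast ha)] at hA
    have haA : ∀ i ∈ s, A a ≠ A i := fun i hi h => hA.2 ⟨i, hi, h.symm⟩
    have hs := ih hbA.2 hA.1 hBb hBA.2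
    have hs_at_a := ih hbA.2 hA.1 hbA.1.symm haA
    have herase : ∀ i ∈ s, ∏ j ∈ (insert a s).erase i, A i / (A i - A j)
        = (∏ j ∈ s.erase i, A i / (A i - A j)) * (A i / (A i - A a)) := fun i hi => by
      rw [erase_insert_of_ne (ne_of_mem_of_not_mem hi ha).symm,
        prod_insert fun h => ha (mem_of_mem_erase h), mul_comm]
    rw [prod_insert ha, prod_insert ha, sum_insert ha, sum_insert ha, erase_insert ha,
      sum_congr rfl fun i hi => by rw [herase i hi, ← mul_assoc]]
    linear_combination (B / (B - A a)) * hs - (B / (B - A a)) * hs_at_a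
      + div_sub_mul_sum_mul_div_sub s
          (fun i => (A i / (A i - b)) ^ 2 * ∏ j ∈ s.erase i, A i / (A i - A j)) A
          hBA.1 hBA.2 haA
      + (∏ i ∈ s, b / (b - A i)) * div_sub_sq_mul_div_sub hBb hBA.1 hbA.1
      + (∏ i ∈ s, b / (b - A i)) * (∑ l ∈ s, A l / (A l - b))
          * div_sub_mul_div_sub hBb hBA.1 hbA.1

end PartialFractions

theorem stmt0_general (n : ℕ) (B : ℂ) (A : ℕ → ℂ)
    (hBA : ∀ i ≤ n, B ≠ A i)
    (hAA : ∀ i ≤ n, ∀ j ≤ n, i ≠ j → A i ≠ A j) :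
    (B / (B - A 0)) ^ 2 * ∏ j ∈ Icc 1 n, B / (B - A j)
      = (∑ i ∈ Icc 1 n, (A i / (A i - A 0)) ^ 2 *
          (∏ j ∈ (Icc 1 n).erase i, A i / (A i - A j)) * (B / (B - A i)))
        + (∏ i ∈ Icc 1 n, A 0 / (A 0 - A i)) *
          ((B / (B - A 0)) ^ 2 +
            (∑ l ∈ Icc 1 n, A l / (A l - A 0)) * (B / (B - A 0))) := by
  have hle : ∀ i ∈ Icc 1 n, i ≤ n := fun i hi => (mem_Icc.mp hi).2
  have hpos : ∀ i ∈ Icc 1 n, 0 ≠ i := fun i hi => by have := (mem_Icc.mp hi).1; omega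
  exact div_sub_sq_mul_prod_div_sub (Icc 1 n) A
    (fun i hi => hAA 0 (Nat.zero_le n) i (hle i hi) (hpos i hi))
    (fun i hi j hj => not_imp_not.mp (hAA i (hle i hi) j (hle j hj)))
    (hBA 0 (Nat.zero_le n)) (fun i hi => hBA i (hle i hi))

theorem stmt0 (n : ℕ) (hn : 1 ≤ n) (B : ℂ) (A : ℕ → ℂ)
    (hB : B ≠ 0) (hA0 : ∀ i ≤ n, A i ≠ 0)
    (hBA : ∀ i ≤ n, B ≠ A i)
    (hAA : ∀ i ≤ n, ∀ j ≤ n, i ≠ j → A i ≠ A j) :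
    (B / (B - A 0)) ^ 2 * ∏ j ∈ Icc 1 n, B / (B - A j)
      = (∑ i ∈ Icc 1 n, (A i / (A i - A 0)) ^ 2 *
          (∏ j ∈ (Icc 1 n).erase i, A i / (A i - A j)) * (B / (B - A i)))
        + (∏ i ∈ Icc 1 n, A 0 / (A 0 - A i)) *
          ((B / (B - A 0)) ^ 2 +
            (∑ l ∈ Icc 1 n, A l / (A l - A 0)) * (B / (B - A 0))) :=
  stmt0_general n B A hBA hAA
end

section
/- Let n ≥ 1 and let B, A_0, A_1, ..., A_n be nonzero pairwise distinct complex numbers. Then (A_0/(B-A_0))^2 · ∏_{j=1}^n A_j/(B-A_j) = ∑_{i=1}^n (A_0/(A_i-A_0))^2 · (∏_{1≤j≤n, j≠i} A_j/(A_i-A_j)) · A_i/(B-A_i) + (∏_{i=1}^n A_i/(A_0-A_i)) · [ (A_0/(B-A_0))^2 + (∑_{l=1}^n A_0/(A_l-A_0)) · A_0/(B-A_0) ]. -/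
/-!
After division by `A 0 ^ 2 * ∏ A j`, the identity is the partial fraction decomposition of
`x ↦ (x - a)⁻¹ ^ 2 * ∏ i, (x - v i)⁻¹` evaluated at `x = B`, with `a = A 0` and `v i = A i`.
The coefficients of the simple poles `v i` are the Lagrange nodal weights
`w i = ∏ j ≠ i, (v i - v j)⁻¹`, because the Lagrange basis sums to one:
`∑ i, w i * ∏ j ≠ i, (X - v j) = 1`. Splitting each `(x - a)⁻¹ ^ 2 * (x - v i)⁻¹` into simple
fractions leaves the sums `∑ w i * (a - v i)⁻¹ = ∏ (a - v i)⁻¹` and `∑ w i * (a - v i)⁻¹ ^ 2`;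
the latter is computed by differentiating the polynomial identity above.
-/

open Finset

namespace Lagrange

open Polynomial

variable {F : Type*} [Field F] {ι : Type*} [DecidableEq ι] {s : Finset ι} {v : ι → F} {x : F}

theorem sum_C_nodalWeight_mul_nodal_erase (hvs : Set.InjOn v s) (hs : s.Nonempty) :
    ∑ i ∈ s, C (nodalWeight s v i) * nodal (s.erase i) v = 1 := by
  rw [← sum_basis hvs hs]
  refine sum_congr rfl fun i hi => ?_
  rw [basis_eq_prod_sub_inv_mul_nodal_div hi, nodal_erase_eq_nodal_div hi]

theorem sum_nodalWeight_mul_inv_sub (hvs : Set.InjOn v s) (hs : s.Nonempty)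
    (hx : ∀ i ∈ s, x ≠ v i) :
    ∑ i ∈ s, nodalWeight s v i * (x - v i)⁻¹ = ∏ i ∈ s, (x - v i)⁻¹ := by
  have h := eval_interpolate_not_at_node 1 hx
  simp only [interpolate_one hvs hs, eval_one, Pi.one_apply, mul_one, eval_nodal] at h
  rw [prod_inv_distrib]
  exact eq_inv_of_mul_eq_one_right h.symm

theorem eval_nodal_erase {i : ι} (hi : i ∈ s) (hxi : x ≠ v i) :
    eval x (nodal (s.erase i) v) = eval x (nodal s v) * (x - v i)⁻¹ := by
  rw [eval_nodal, eval_nodal, ← prod_erase_mul _ _ hi, mul_inv_cancel_right₀ (sub_ne_zero.2 hxi)]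

theorem eval_derivative_nodal (hx : ∀ i ∈ s, x ≠ v i) :
    eval x (derivative (nodal s v)) = eval x (nodal s v) * ∑ i ∈ s, (x - v i)⁻¹ := by
  rw [derivative_nodal, eval_finsetSum, mul_sum]
  exact sum_congr rfl fun i hi => eval_nodal_erase hi (hx i hi)

theorem sum_nodalWeight_mul_inv_sub_sq (hvs : Set.InjOn v s) (hx : ∀ i ∈ s, x ≠ v i) :
    ∑ i ∈ s, nodalWeight s v i * (x - v i)⁻¹ ^ 2
      = (∏ i ∈ s, (x - v i)⁻¹) * ∑ i ∈ s, (x - v i)⁻¹ := by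
  rcases s.eq_empty_or_nonempty with rfl | hs
  · simp
  have h0 : ∑ i ∈ s, nodalWeight s v i * eval x (derivative (nodal (s.erase i) v)) = 0 := by
    simpa [derivative_sum, eval_finsetSum] using
      congrArg (fun p => eval x (derivative p)) (sum_C_nodalWeight_mul_nodal_erase hvs hs)
  have hterm : ∀ i ∈ s, nodalWeight s v i * eval x (derivative (nodal (s.erase i) v))
      = eval x (nodal s v) * (nodalWeight s v i * (x - v i)⁻¹ * ∑ k ∈ s, (x - v k)⁻¹
          - nodalWeight s v i * (x - v i)⁻¹ ^ 2) := by
    intro i hi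
    rw [eval_derivative_nodal fun k hk => hx k (mem_of_mem_erase hk),
      eval_nodal_erase hi (hx i hi), sum_erase_eq_sub hi]
    ring
  rw [sum_congr rfl hterm, ← mul_sum, sum_sub_distrib, ← sum_mul,
    sum_nodalWeight_mul_inv_sub hvs hs hx] at h0
  exact (sub_eq_zero.1 ((mul_eq_zero.1 h0).resolve_left (eval_nodal_not_at_node hx))).symm

theorem inv_sub_sq_mul_inv_sub {a b : F} (hxa : x ≠ a) (hxb : x ≠ b) (hab : a ≠ b) :
    (x - a)⁻¹ ^ 2 * (x - b)⁻¹
      = (b - a)⁻¹ ^ 2 * (x - b)⁻¹ + (a - b)⁻¹ * (x - a)⁻¹ ^ 2 - (a - b)⁻¹ ^ 2 * (x - a)⁻¹ := by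
  have hxa' := sub_ne_zero.2 hxa
  have hxb' := sub_ne_zero.2 hxb
  have hab' := sub_ne_zero.2 hab
  have hba' := sub_ne_zero.2 hab.symm
  field_simp
  ring

theorem inv_sub_sq_mul_prod_inv_sub {a : F} (hvs : Set.InjOn v s) (ha : ∀ i ∈ s, a ≠ v i)
    (hx : ∀ i ∈ s, x ≠ v i) (hxa : x ≠ a) :
    (x - a)⁻¹ ^ 2 * ∏ i ∈ s, (x - v i)⁻¹
      = ∑ i ∈ s, (v i - a)⁻¹ ^ 2 * nodalWeight s v i * (x - v i)⁻¹
        + (∏ i ∈ s, (a - v i)⁻¹) * ((x - a)⁻¹ ^ 2 + (∑ i ∈ s, (v i - a)⁻¹) * (x - a)⁻¹) := by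
  rcases s.eq_empty_or_nonempty with rfl | hs
  · simp
  have hneg : ∑ i ∈ s, (v i - a)⁻¹ = -∑ i ∈ s, (a - v i)⁻¹ := by
    rw [← sum_neg_distrib]
    exact sum_congr rfl fun i _ => by rw [← inv_neg, neg_sub]
  calc (x - a)⁻¹ ^ 2 * ∏ i ∈ s, (x - v i)⁻¹
      = ∑ i ∈ s, ((v i - a)⁻¹ ^ 2 * nodalWeight s v i * (x - v i)⁻¹
          + nodalWeight s v i * (a - v i)⁻¹ * (x - a)⁻¹ ^ 2
          - nodalWeight s v i * (a - v i)⁻¹ ^ 2 * (x - a)⁻¹) := by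
        rw [← sum_nodalWeight_mul_inv_sub hvs hs hx, mul_sum]
        refine sum_congr rfl fun i hi => ?_
        linear_combination nodalWeight s v i * inv_sub_sq_mul_inv_sub hxa (hx i hi) (ha i hi)
    _ = _ := by
        rw [sum_sub_distrib, sum_add_distrib, ← sum_mul, ← sum_mul,
          sum_nodalWeight_mul_inv_sub hvs hs ha, sum_nodalWeight_mul_inv_sub_sq hvs ha, hneg]
        ring

end Lagrange

theorem stmt1_general (n : ℕ) (B : ℂ) (A : ℕ → ℂ)
    (hBA : ∀ i ≤ n, B ≠ A i)
    (hAA : ∀ i ≤ n, ∀ j ≤ n, i ≠ j → A i ≠ A j) :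
    (A 0 / (B - A 0)) ^ 2 * ∏ j ∈ Icc 1 n, A j / (B - A j)
      = (∑ i ∈ Icc 1 n, (A 0 / (A i - A 0)) ^ 2 *
          (∏ j ∈ (Icc 1 n).erase i, A j / (A i - A j)) * (A i / (B - A i)))
        + (∏ i ∈ Icc 1 n, A i / (A 0 - A i)) *
          ((A 0 / (B - A 0)) ^ 2 +
            (∑ l ∈ Icc 1 n, A 0 / (A l - A 0)) * (A 0 / (B - A 0))) := by
  have hinj : Set.InjOn A (Icc 1 n) := fun i hi j hj hAij => by
    by_contra hij
    exact hAA i (mem_Icc.1 hi).2 j (mem_Icc.1 hj).2 hij hAij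
  have hnode : ∀ i ∈ Icc 1 n, A 0 ≠ A i := fun i hi =>
    hAA 0 n.zero_le i (mem_Icc.1 hi).2 (Nat.one_le_iff_ne_zero.1 (mem_Icc.1 hi).1).symm
  have key := Lagrange.inv_sub_sq_mul_prod_inv_sub hinj hnode
    (fun i hi => hBA i (mem_Icc.1 hi).2) (hBA 0 n.zero_le)
  simp only [div_eq_mul_inv, mul_pow, prod_mul_distrib]
  rw [← mul_sum (Icc 1 n) (fun l => (A l - A 0)⁻¹) (A 0)]
  calc A 0 ^ 2 * (B - A 0)⁻¹ ^ 2 * ((∏ j ∈ Icc 1 n, A j) * ∏ j ∈ Icc 1 n, (B - A j)⁻¹)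
      = A 0 ^ 2 * (∏ j ∈ Icc 1 n, A j) * ((B - A 0)⁻¹ ^ 2 * ∏ j ∈ Icc 1 n, (B - A j)⁻¹) := by
        ring
    _ = _ := by
        rw [key, mul_add, mul_sum]
        congr 1
        · refine sum_congr rfl fun i hi => ?_
          rw [← prod_erase_mul _ _ hi, Lagrange.nodalWeight]
          ring
        · ring

theorem stmt1 (n : ℕ) (hn : 1 ≤ n) (B : ℂ) (A : ℕ → ℂ)
    (hB : B ≠ 0) (hA0 : ∀ i ≤ n, A i ≠ 0)
    (hBA : ∀ i ≤ n, B ≠ A i)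
    (hAA : ∀ i ≤ n, ∀ j ≤ n, i ≠ j → A i ≠ A j) :
    (A 0 / (B - A 0)) ^ 2 * ∏ j ∈ Icc 1 n, A j / (B - A j)
      = (∑ i ∈ Icc 1 n, (A 0 / (A i - A 0)) ^ 2 *
          (∏ j ∈ (Icc 1 n).erase i, A j / (A i - A j)) * (A i / (B - A i)))
        + (∏ i ∈ Icc 1 n, A i / (A 0 - A i)) *
          ((A 0 / (B - A 0)) ^ 2 +
            (∑ l ∈ Icc 1 n, A 0 / (A l - A 0)) * (A 0 / (B - A 0))) :=
  stmt1_general n B A hBA hAA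
end

section
/- Let A_0, A_1, ..., A_n be nonzero pairwise distinct complex numbers and let x be a nonzero complex number with A_i x ≠ 1 for all i. Then (1/(1-A_0 x))^2 · ∏_{j=1}^n 1/(1-A_j x) = ∑_{i=1}^n (A_i/(A_i-A_0))^2 · (∏_{1≤j≤n, j≠i} A_i/(A_i-A_j)) · 1/(1-A_i x) + (∏_{i=1}^n A_0/(A_0-A_i)) · [ A_0 x/(1-A_0 x)^2 + (1 + ∑_{l=1}^n A_l/(A_l-A_0)) · 1/(1-A_0 x) ]. -/
/-!
In the variable `t = x⁻¹` each factor `1 / (1 - a * x)` becomes `t / (t - a)`, and the identity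
is a partial fraction decomposition in `t`, proved by induction on the set of simple poles.
Multiplying by a new factor `t / (t - c)`, every product of two pole terms splits into partial
fractions, and the coefficient collected on `t / (t - c)` is the right-hand side of the induction
hypothesis at `t = c`, hence equal to its left-hand side there, which is the new coefficient.
-/

open Finset

variable {K : Type*} [Field K]

theorem div_sub_mul_div_sub_s2 {a c t : K} (hac : a ≠ c) (hta : t ≠ a) (htc : t ≠ c) :
    t / (t - a) * (t / (t - c)) = a / (a - c) * (t / (t - a)) + c / (c - a) * (t / (t - c)) := by
  have : a - c ≠ 0 := sub_ne_zero.2 hac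
  have : c - a ≠ 0 := sub_ne_zero.2 hac.symm
  have : t - a ≠ 0 := sub_ne_zero.2 hta
  have : t - c ≠ 0 := sub_ne_zero.2 htc
  field_simp
  ring

theorem mul_div_sub_sq_mul_div_sub {b c t : K} (hbc : b ≠ c) (htb : t ≠ b) (htc : t ≠ c) :
    b * t / (t - b) ^ 2 * (t / (t - c)) = b / (b - c) * (b * t / (t - b) ^ 2)
      + b / (b - c) * (c / (c - b)) * (t / (t - b)) + b * c / (c - b) ^ 2 * (t / (t - c)) := by
  have : b - c ≠ 0 := sub_ne_zero.2 hbc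
  have : c - b ≠ 0 := sub_ne_zero.2 hbc.symm
  have : t - b ≠ 0 := sub_ne_zero.2 htb
  have : t - c ≠ 0 := sub_ne_zero.2 htc
  field_simp
  ring

theorem inv_div_inv_sub {x : K} (hx : x ≠ 0) (a : K) : x⁻¹ / (x⁻¹ - a) = 1 / (1 - a * x) := by
  rw [← mul_div_mul_right _ _ hx, sub_mul, inv_mul_cancel₀ hx]

theorem mul_inv_div_inv_sub_sq {x : K} (hx : x ≠ 0) (b : K) :
    b * x⁻¹ / (x⁻¹ - b) ^ 2 = b * x / (1 - b * x) ^ 2 := by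
  rw [← mul_div_mul_right _ _ (pow_ne_zero 2 hx), ← mul_pow, sub_mul, inv_mul_cancel₀ hx]
  congr 1
  field_simp

theorem sum_mul_div_sub_mul_div_sub {ι : Type*} (s : Finset ι) (α a : ι → K) {c t : K}
    (hca : ∀ i ∈ s, a i ≠ c) (hta : ∀ i ∈ s, t ≠ a i) (htc : t ≠ c) :
    (∑ i ∈ s, α i * (t / (t - a i))) * (t / (t - c))
      = ∑ i ∈ s, α i * (a i / (a i - c)) * (t / (t - a i))
        + (∑ i ∈ s, α i * (c / (c - a i))) * (t / (t - c)) := by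
  rw [sum_mul, sum_mul, ← sum_add_distrib]
  refine sum_congr rfl fun i hi => ?_
  rw [mul_assoc, div_sub_mul_div_sub_s2 (hca i hi) (hta i hi) htc]
  ring

theorem double_pole_partial_fraction {ι : Type*} [DecidableEq ι] (s : Finset ι) (a : ι → K)
    (b t : K) (ha : Set.InjOn a s) (hab : ∀ i ∈ s, a i ≠ b) (htb : t ≠ b)
    (hta : ∀ i ∈ s, t ≠ a i) :
    (t / (t - b)) ^ 2 * ∏ j ∈ s, t / (t - a j)
      = ∑ i ∈ s, (a i / (a i - b)) ^ 2 * (∏ j ∈ s.erase i, a i / (a i - a j)) * (t / (t - a i))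
        + (∏ i ∈ s, b / (b - a i)) *
          (b * t / (t - b) ^ 2 + (1 + ∑ l ∈ s, a l / (a l - b)) * (t / (t - b))) := by
  induction s using Finset.induction_on generalizing t with
  | empty =>
    have : t - b ≠ 0 := sub_ne_zero.2 htb
    simp only [prod_empty, sum_empty, mul_one, one_mul, add_zero, zero_add]
    field_simp
    ring
  | insert c s hc ih =>
    have hcs : ∀ i ∈ s, a i ≠ a c := fun i hi h =>
      hc (ha (mem_insert_of_mem hi) (mem_insert_self c s) h ▸ hi)
    have hab' : ∀ i ∈ s, a i ≠ b := fun i hi => hab i (mem_insert_of_mem hi)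
    have hta' : ∀ i ∈ s, t ≠ a i := fun i hi => hta i (mem_insert_of_mem hi)
    have htc : t ≠ a c := hta c (mem_insert_self c s)
    have hcb : a c ≠ b := hab c (mem_insert_self c s)
    have ha' : Set.InjOn a s := ha.mono (by simp)
    have ih_t := ih t ha' hab' htb hta'
    have ih_c := ih (a c) ha' hab' hcb fun i hi => (hcs i hi).symm
    have hsplit := sum_mul_div_sub_mul_div_sub s
      (fun i => (a i / (a i - b)) ^ 2 * ∏ j ∈ s.erase i, a i / (a i - a j)) a hcs hta' htc
    have herase : ∑ i ∈ s, (a i / (a i - b)) ^ 2 * (∏ j ∈ (insert c s).erase i, a i / (a i - a j))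
          * (t / (t - a i))
        = ∑ i ∈ s, (a i / (a i - b)) ^ 2 * (∏ j ∈ s.erase i, a i / (a i - a j))
          * (a i / (a i - a c)) * (t / (t - a i)) := sum_congr rfl fun i hi => by
      rw [erase_insert_of_ne (by rintro rfl; exact hc hi), prod_insert (by simp [hc])]
      ring
    rw [prod_insert hc, sum_insert hc, prod_insert hc, sum_insert hc, erase_insert hc, herase]
    linear_combination t / (t - a c) * ih_t + hsplit - t / (t - a c) * ih_c
      + (∏ i ∈ s, b / (b - a i)) * mul_div_sub_sq_mul_div_sub hcb.symm htb htc
      + (∏ i ∈ s, b / (b - a i)) * (1 + ∑ l ∈ s, a l / (a l - b))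
        * div_sub_mul_div_sub_s2 hcb.symm htb htc

theorem stmt2_general (n : ℕ) (x : ℂ) (A : ℕ → ℂ)
    (hx : x ≠ 0)
    (hAx : ∀ i ≤ n, A i * x ≠ 1)
    (hAA : ∀ i ≤ n, ∀ j ≤ n, i ≠ j → A i ≠ A j) :
    (1 / (1 - A 0 * x)) ^ 2 * ∏ j ∈ Icc 1 n, 1 / (1 - A j * x)
      = (∑ i ∈ Icc 1 n, (A i / (A i - A 0)) ^ 2 *
          (∏ j ∈ (Icc 1 n).erase i, A i / (A i - A j)) * (1 / (1 - A i * x)))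
        + (∏ i ∈ Icc 1 n, A 0 / (A 0 - A i)) *
          (A 0 * x / (1 - A 0 * x) ^ 2 +
            (1 + ∑ l ∈ Icc 1 n, A l / (A l - A 0)) * (1 / (1 - A 0 * x))) := by
  have hxA : ∀ i ≤ n, x⁻¹ ≠ A i := fun i hi h => hAx i hi (by rw [← h, inv_mul_cancel₀ hx])
  have key := double_pole_partial_fraction (Icc 1 n) A (A 0) x⁻¹
    (fun i hi j hj h => by_contra fun hij => hAA i (mem_Icc.1 hi).2 j (mem_Icc.1 hj).2 hij h)
    (fun i hi => hAA i (mem_Icc.1 hi).2 0 (Nat.zero_le n) (by have := (mem_Icc.1 hi).1; omega))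
    (hxA 0 (Nat.zero_le n)) (fun i hi => hxA i (mem_Icc.1 hi).2)
  simpa only [inv_div_inv_sub hx, mul_inv_div_inv_sub_sq hx] using key

theorem stmt2 (n : ℕ) (hn : 1 ≤ n) (x : ℂ) (A : ℕ → ℂ)
    (hx : x ≠ 0) (hA0 : ∀ i ≤ n, A i ≠ 0)
    (hAx : ∀ i ≤ n, A i * x ≠ 1)
    (hAA : ∀ i ≤ n, ∀ j ≤ n, i ≠ j → A i ≠ A j) :
    (1 / (1 - A 0 * x)) ^ 2 * ∏ j ∈ Icc 1 n, 1 / (1 - A j * x)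
      = (∑ i ∈ Icc 1 n, (A i / (A i - A 0)) ^ 2 *
          (∏ j ∈ (Icc 1 n).erase i, A i / (A i - A j)) * (1 / (1 - A i * x)))
        + (∏ i ∈ Icc 1 n, A 0 / (A 0 - A i)) *
          (A 0 * x / (1 - A 0 * x) ^ 2 +
            (1 + ∑ l ∈ Icc 1 n, A l / (A l - A 0)) * (1 / (1 - A 0 * x))) :=
  stmt2_general n x A hx hAx hAA
end

section
/- Let A_0, A_1, ..., A_n be nonzero pairwise distinct complex numbers and let x be a nonzero complex number with A_i x ≠ 1 for all i. Then (A_0 x/(1-A_0 x))^2 · ∏_{j=1}^n A_j x/(1-A_j x) = ∑_{i=1}^n (A_0/(A_i-A_0))^2 · (∏_{1≤j≤n, j≠i} A_j/(A_i-A_j)) · A_i x/(1-A_i x) + (∏_{i=1}^n A_i/(A_0-A_i)) · [ A_0 x/(1-A_0 x)^2 + (∑_{l=1}^n A_0/(A_l-A_0) − 1) · A_0 x/(1-A_0 x) ]. -/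
/-!
Write `u c = c x / (1 - c x)` and induct on the index set. Multiplying the expansion for `s` by the
new factor `u b`, a product of two simple poles splits as
`u c * u b = b / (c - b) * u c + c / (b - c) * u b`, and the double pole `a x / (1 - a x) ^ 2`
times `u b` splits similarly. Every resulting term has the required shape except the coefficient
of `u b`, which is the old expansion evaluated at `x = b⁻¹` (where `u c = c / (b - c)`), so the
induction hypothesis at `b⁻¹` identifies it.
-/

open Finset

section PartialFractions

variable {K : Type*} [Field K] {a b c x : K}

theorem div_one_sub_mul_sq (hc : c * x ≠ 1) :
    (c * x / (1 - c * x)) ^ 2 = c * x / (1 - c * x) ^ 2 - c * x / (1 - c * x) := by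
  have : 1 - c * x ≠ 0 := sub_ne_zero.2 hc.symm
  rw [← sub_eq_zero]
  field_simp
  ring

theorem div_one_sub_mul_mul_div_one_sub_mul (hc : c * x ≠ 1) (hb : b * x ≠ 1) (hcb : c ≠ b) :
    c * x / (1 - c * x) * (b * x / (1 - b * x))
      = b / (c - b) * (c * x / (1 - c * x)) + c / (b - c) * (b * x / (1 - b * x)) := by
  have : 1 - c * x ≠ 0 := sub_ne_zero.2 hc.symm
  -- the normal form `field_simp` uses for this denominator
  have : 1 - x * b ≠ 0 := sub_ne_zero.2 (mul_comm b x ▸ hb.symm)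
  have : c - b ≠ 0 := sub_ne_zero.2 hcb
  have : b - c ≠ 0 := sub_ne_zero.2 hcb.symm
  field_simp
  ring

theorem div_one_sub_mul_sq_mul_div_one_sub_mul (t : K) (ha : a * x ≠ 1) (hb : b * x ≠ 1)
    (hab : a ≠ b) :
    (a * x / (1 - a * x) ^ 2 + t * (a * x / (1 - a * x))) * (b * x / (1 - b * x))
      = (a * b / (b - a) ^ 2 + t * (a / (b - a))) * (b * x / (1 - b * x))
        + b / (a - b) * (a * x / (1 - a * x) ^ 2 + (t + a / (b - a)) * (a * x / (1 - a * x))) := by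
  have : 1 - a * x ≠ 0 := sub_ne_zero.2 ha.symm
  have : 1 - b * x ≠ 0 := sub_ne_zero.2 hb.symm
  have : a - b ≠ 0 := sub_ne_zero.2 hab
  have : b - a ≠ 0 := sub_ne_zero.2 hab.symm
  rw [eq_comm, ← sub_eq_zero]
  field_simp
  ring

theorem sum_mul_div_one_sub_mul {ι : Type*} (s : Finset ι) (A w : ι → K)
    (hAx : ∀ i ∈ s, A i * x ≠ 1) (hb : b * x ≠ 1) (hAb : ∀ i ∈ s, A i ≠ b) :
    (∑ i ∈ s, w i * (A i * x / (1 - A i * x))) * (b * x / (1 - b * x))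
      = ∑ i ∈ s, w i * (b / (A i - b)) * (A i * x / (1 - A i * x))
        + (∑ i ∈ s, w i * (A i / (b - A i))) * (b * x / (1 - b * x)) := by
  rw [sum_mul, sum_mul, ← sum_add_distrib]
  refine sum_congr rfl fun i hi => ?_
  rw [mul_assoc, div_one_sub_mul_mul_div_one_sub_mul (hAx i hi) hb (hAb i hi)]
  ring

theorem div_one_sub_mul_inv (hb : b ≠ 0) : c * b⁻¹ / (1 - c * b⁻¹) = c / (b - c) := by
  rw [← mul_div_mul_right _ _ hb, sub_mul, inv_mul_cancel_right₀ hb, one_mul]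

theorem div_one_sub_mul_inv_sq (hb : b ≠ 0) :
    c * b⁻¹ / (1 - c * b⁻¹) ^ 2 = c * b / (b - c) ^ 2 := by
  rw [← mul_div_mul_right _ _ (pow_ne_zero 2 hb), ← mul_pow, sub_mul, inv_mul_cancel_right₀ hb,
    one_mul, sq, ← mul_assoc, inv_mul_cancel_right₀ hb]

end PartialFractions

theorem sq_mul_prod_div_one_sub_mul {K ι : Type*} [Field K] [DecidableEq ι] (s : Finset ι)
    (A : ι → K) (a x : K) (ha : a * x ≠ 1) (hAx : ∀ i ∈ s, A i * x ≠ 1) (hA : ∀ i ∈ s, A i ≠ 0)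
    (hAa : ∀ i ∈ s, A i ≠ a) (hinj : Set.InjOn A s) :
    (a * x / (1 - a * x)) ^ 2 * ∏ j ∈ s, A j * x / (1 - A j * x)
      = (∑ i ∈ s, (a / (A i - a)) ^ 2 *
          (∏ j ∈ s.erase i, A j / (A i - A j)) * (A i * x / (1 - A i * x)))
        + (∏ i ∈ s, A i / (a - A i)) *
          (a * x / (1 - a * x) ^ 2 +
            ((∑ l ∈ s, a / (A l - a)) - 1) * (a * x / (1 - a * x))) := by
  induction s using Finset.induction_on generalizing x with
  | empty =>
    rw [prod_empty, prod_empty, sum_empty, sum_empty, div_one_sub_mul_sq ha]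
    ring
  | insert k s hk ih =>
    rw [forall_mem_insert] at hAx hA hAa
    rw [coe_insert, Set.injOn_insert (mem_coe.not.2 hk)] at hinj
    obtain ⟨hkx, hAx⟩ := hAx
    obtain ⟨hAk, hA⟩ := hA
    obtain ⟨hka, hAa⟩ := hAa
    obtain ⟨hinj, hk_image⟩ := hinj
    have hne : ∀ i ∈ s, A i ≠ A k := fun i hi h => hk_image ⟨i, hi, h⟩
    have ih_x := ih x ha hAx hA hAa hinj
    have ih_pole := ih (A k)⁻¹ ((mul_inv_eq_one₀ hAk).not.2 hka.symm)
      (fun i hi => (mul_inv_eq_one₀ hAk).not.2 (hne i hi)) hA hAa hinj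
    simp only [div_one_sub_mul_inv hAk, div_one_sub_mul_inv_sq hAk] at ih_pole
    have herase : ∀ i ∈ s, ∏ j ∈ (insert k s).erase i, A j / (A i - A j)
        = (∏ j ∈ s.erase i, A j / (A i - A j)) * (A k / (A i - A k)) := fun i hi => by
      rw [erase_insert_of_ne (by rintro rfl; exact hk hi),
        prod_insert fun h => hk (mem_of_mem_erase h), mul_comm]
    rw [prod_insert hk, prod_insert hk, sum_insert hk, sum_insert hk, erase_insert hk,
      sum_congr rfl fun i hi => by rw [herase i hi, ← mul_assoc]]
    linear_combination (A k * x / (1 - A k * x)) * (ih_x - ih_pole)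
      + sum_mul_div_one_sub_mul s A
          (fun i => (a / (A i - a)) ^ 2 * ∏ j ∈ s.erase i, A j / (A i - A j)) hAx hkx hne
      + (∏ i ∈ s, A i / (a - A i)) *
          div_one_sub_mul_sq_mul_div_one_sub_mul (∑ l ∈ s, a / (A l - a) - 1) ha hkx hka.symm

theorem stmt3_general (n : ℕ) (x : ℂ) (A : ℕ → ℂ)
    (hA0 : ∀ i ≤ n, A i ≠ 0)
    (hAx : ∀ i ≤ n, A i * x ≠ 1)
    (hAA : ∀ i ≤ n, ∀ j ≤ n, i ≠ j → A i ≠ A j) :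
    (A 0 * x / (1 - A 0 * x)) ^ 2 * ∏ j ∈ Icc 1 n, A j * x / (1 - A j * x)
      = (∑ i ∈ Icc 1 n, (A 0 / (A i - A 0)) ^ 2 *
          (∏ j ∈ (Icc 1 n).erase i, A j / (A i - A j)) * (A i * x / (1 - A i * x)))
        + (∏ i ∈ Icc 1 n, A i / (A 0 - A i)) *
          (A 0 * x / (1 - A 0 * x) ^ 2 +
            ((∑ l ∈ Icc 1 n, A 0 / (A l - A 0)) - 1) * (A 0 * x / (1 - A 0 * x))) := by
  have hle : ∀ i ∈ Icc 1 n, i ≤ n := fun i hi => (mem_Icc.1 hi).2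
  have hpos : ∀ i ∈ Icc 1 n, i ≠ 0 := fun i hi => Nat.one_le_iff_ne_zero.1 (mem_Icc.1 hi).1
  exact sq_mul_prod_div_one_sub_mul _ A (A 0) x (hAx 0 n.zero_le)
    (fun i hi => hAx i (hle i hi)) (fun i hi => hA0 i (hle i hi))
    (fun i hi => hAA i (hle i hi) 0 n.zero_le (hpos i hi))
    (fun i hi j hj h => by_contra fun hij => hAA i (hle i hi) j (hle j hj) hij h)

theorem stmt3 (n : ℕ) (hn : 1 ≤ n) (x : ℂ) (A : ℕ → ℂ)
    (hx : x ≠ 0) (hA0 : ∀ i ≤ n, A i ≠ 0)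
    (hAx : ∀ i ≤ n, A i * x ≠ 1)
    (hAA : ∀ i ≤ n, ∀ j ≤ n, i ≠ j → A i ≠ A j) :
    (A 0 * x / (1 - A 0 * x)) ^ 2 * ∏ j ∈ Icc 1 n, A j * x / (1 - A j * x)
      = (∑ i ∈ Icc 1 n, (A 0 / (A i - A 0)) ^ 2 *
          (∏ j ∈ (Icc 1 n).erase i, A j / (A i - A j)) * (A i * x / (1 - A i * x)))
        + (∏ i ∈ Icc 1 n, A i / (A 0 - A i)) *
          (A 0 * x / (1 - A 0 * x) ^ 2 +
            ((∑ l ∈ Icc 1 n, A 0 / (A l - A 0)) - 1) * (A 0 * x / (1 - A 0 * x))) :=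
  stmt3_general n x A hA0 hAx hAA
end

section
/- Define the δ-function formal distribution δ(y) = ∑_{n∈ℤ} y^n, viewed as a formal sum of Laurent series, and for a nonzero complex number A write, as rational-function expansions, 1/(1-Ax) = ∑_{n≥0} (Ax)^n and A^{-1}x^{-1}/(1-A^{-1}x^{-1}) = ∑_{n≥1} (Ax)^{-n}. Then for pairwise distinct nonzero complex numbers A_1, ..., A_n: ∏_{i=1}^n 1/(1-A_i x) − (−1)^n ∏_{i=1}^n A_i^{-1}x^{-1}/(1-A_i^{-1}x^{-1}) = ∑_{i=1}^n (∏_{1≤j≤n, j≠i} A_i/(A_i−A_j)) · δ(A_i x), as an identity of formal distributions in x (i.e. comparing the coefficient of x^m on both sides for every integer m). -/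
/-!
Write `c i = ∏_{j ≠ i} A i / (A i - A j)`. The Lagrange basis polynomials at the nodes
`(A i)⁻¹` are `c i * ∏_{j ≠ i} (1 - A j x)`, so they sum to `1`; in power series this is the
partial fraction decomposition `∏ 1 / (1 - A i x) = ∑ c i / (1 - A i x)`, whose `x^m`
coefficient gives the complete homogeneous sum `h_m(A) = ∑ c i * A i ^ m` for `m ≥ 0`.
For `-n < m < 0`, `∑ c i * A i ^ m` is the `x^(n-1)` coefficient of the interpolant of
`x^(n-1+m)`, hence `0`. For `m ≤ -n`, the coefficients `c' i` of `A⁻¹` satisfy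
`(∏ (A j)⁻¹) * c' i = (-1)^(n-1) * c i / A i ^ n`, which reduces the claim to the case `m ≥ 0`
for `A⁻¹`.
-/

open Finset

namespace PowerSeries

theorem rescale_mk_one_mul_one_sub {R : Type*} [CommRing R] (a : R) :
    rescale a (mk 1) * (1 - C a * X) = 1 := by
  simpa [rescale_X] using congr(rescale a $(mk_one_mul_one_sub_eq_one (S := R)))

theorem coeff_prod_rescale_mk_one {R : Type*} [CommSemiring R] {n : ℕ} (a : Fin n → R) (d : ℕ) :
    coeff d (∏ i, rescale (a i) (mk 1)) = ∑ k ∈ Nat.antidiagonalTuple n d, ∏ i, a i ^ k i := by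
  rw [coeff_prod]
  refine sum_equiv Finsupp.equivFunOnFinite (fun l => ?_) (fun l _ => ?_)
  · simp [Nat.mem_antidiagonalTuple]
  · simp

end PowerSeries

section PartialFractions

variable {K : Type*} [Field K] {ι : Type*} [Fintype ι] [DecidableEq ι]

def partialFracCoeff (A : ι → K) (i : ι) : K :=
  ∏ j ∈ univ.erase i, A i / (A i - A j)

theorem partialFracCoeff_eq_pow_mul_nodalWeight (A : ι → K) (i : ι) :
    partialFracCoeff A i = A i ^ (Fintype.card ι - 1) * Lagrange.nodalWeight univ A i := by
  simp only [partialFracCoeff, Lagrange.nodalWeight, div_eq_mul_inv, prod_mul_distrib, prod_const,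
    card_erase_of_mem (mem_univ i), card_univ]

open Polynomial in
theorem Lagrange.basisDivisor_inv_inv {a b : K} (ha : a ≠ 0) (hb : b ≠ 0) (hab : a ≠ b) :
    Lagrange.basisDivisor a⁻¹ b⁻¹ = C (a / (a - b)) * (1 - C b * X) := by
  have : a - b ≠ 0 := sub_ne_zero.mpr hab
  have : b - a ≠ 0 := sub_ne_zero.mpr hab.symm
  rw [Lagrange.basisDivisor, inv_sub_inv ha hb]
  ext k
  rcases k with _ | _ | k <;> simp [coeff_X, coeff_one] <;> field_simp <;> ring

variable {A : ι → K}

open Polynomial in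
theorem basis_inv_eq_partialFracCoeff (hA : ∀ i, A i ≠ 0) (hinj : Function.Injective A)
    (i : ι) :
    Lagrange.basis univ A⁻¹ i =
      C (partialFracCoeff A i) * ∏ j ∈ univ.erase i, (1 - C (A j) * X) := by
  rw [Lagrange.basis, partialFracCoeff, map_prod, ← prod_mul_distrib]
  exact prod_congr rfl fun j hj =>
    Lagrange.basisDivisor_inv_inv (hA i) (hA j) (hinj.ne (ne_of_mem_erase hj).symm)

open Polynomial in
theorem sum_partialFracCoeff_mul_prod_one_sub [Nonempty ι] (hA : ∀ i, A i ≠ 0)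
    (hinj : Function.Injective A) :
    ∑ i, C (partialFracCoeff A i) * ∏ j ∈ univ.erase i, (1 - C (A j) * X) = 1 := by
  simp_rw [← basis_inv_eq_partialFracCoeff hA hinj]
  exact Lagrange.sum_basis (inv_injective.comp hinj).injOn univ_nonempty

open PowerSeries in
theorem prod_rescale_mk_one_eq_sum [Nonempty ι] (hA : ∀ i, A i ≠ 0)
    (hinj : Function.Injective A) :
    ∏ i, rescale (A i) (mk 1) = ∑ i, C (partialFracCoeff A i) * rescale (A i) (mk 1) := by
  have hpf : ∑ i, C (partialFracCoeff A i) * ∏ j ∈ univ.erase i, (1 - C (A j) * X) = 1 := by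
    have := congr(Polynomial.coeToPowerSeries.ringHom
      $(sum_partialFracCoeff_mul_prod_one_sub hA hinj))
    simpa only [map_sum, map_mul, map_prod, map_sub, map_one,
      Polynomial.coeToPowerSeries.ringHom_apply, Polynomial.coe_C, Polynomial.coe_X] using this
  rw [← one_mul (∏ i, _), ← hpf, sum_mul]
  refine sum_congr rfl fun i _ => ?_
  rw [← mul_prod_erase univ _ (mem_univ i), mul_left_comm, mul_assoc, ← prod_mul_distrib,
    prod_congr rfl fun j _ => mul_comm _ _,
    prod_congr rfl fun j _ => rescale_mk_one_mul_one_sub (A j), prod_const_one, mul_one, mul_comm]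

theorem sum_antidiagonalTuple_prod_pow {n : ℕ} [NeZero n] {A : Fin n → K}
    (hA : ∀ i, A i ≠ 0) (hinj : Function.Injective A) (d : ℕ) :
    ∑ k ∈ Nat.antidiagonalTuple n d, ∏ i, A i ^ k i = ∑ i, partialFracCoeff A i * A i ^ d := by
  simp [← PowerSeries.coeff_prod_rescale_mk_one, prod_rescale_mk_one_eq_sum hA hinj]

open Polynomial in
theorem sum_partialFracCoeff_mul_zpow_eq_zero (hA : ∀ i, A i ≠ 0) (hinj : Function.Injective A)
    {m : ℤ} (hm : -(Fintype.card ι : ℤ) < m) (hm0 : m < 0) :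
    ∑ i, partialFracCoeff A i * A i ^ m = 0 := by
  obtain ⟨e, he⟩ : ∃ e : ℕ, (e : ℤ) = Fintype.card ι - 1 + m :=
    ⟨(Fintype.card ι - 1 + m).toNat, by omega⟩
  have hdeg : (X ^ e : K[X]).degree < #(univ : Finset ι) := by
    rw [degree_X_pow, card_univ]
    exact_mod_cast (by omega : e < Fintype.card ι)
  have key := Lagrange.coeff_eq_sum hinj.injOn hdeg
  rw [coeff_X_pow, if_neg (by rw [card_univ]; omega)] at key
  rw [key]
  refine sum_congr rfl fun i _ => ?_
  rw [partialFracCoeff_eq_pow_mul_nodalWeight, Lagrange.nodalWeight, prod_inv_distrib, eval_pow,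
    eval_X, div_eq_mul_inv, mul_right_comm, ← zpow_natCast, ← zpow_natCast, ← zpow_add₀ (hA i)]
  congr 2
  omega

theorem partialFracCoeff_inv (hA : ∀ i, A i ≠ 0) (hinj : Function.Injective A) (i : ι) :
    (∏ j, (A j)⁻¹) * partialFracCoeff A⁻¹ i =
      (-1) ^ (Fintype.card ι - 1) * partialFracCoeff A i / A i ^ Fintype.card ι := by
  have hfactor : ∀ j ∈ univ.erase i, A⁻¹ i / (A⁻¹ i - A⁻¹ j) =
      (-1) * A j * (A i)⁻¹ * (A i / (A i - A j)) := fun j hj => by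
    have := sub_ne_zero.mpr (hinj.ne (ne_of_mem_erase hj).symm)
    have := sub_ne_zero.mpr (hinj.ne (ne_of_mem_erase hj))
    have := hA i
    have := hA j
    simp only [Pi.inv_apply]
    field_simp
    ring
  have hcancel : (∏ j ∈ univ.erase i, (A j)⁻¹) * ∏ j ∈ univ.erase i, A j = 1 := by
    rw [← prod_mul_distrib]
    exact prod_eq_one fun j _ => inv_mul_cancel₀ (hA j)
  obtain ⟨k, hk⟩ : ∃ k, Fintype.card ι = k + 1 :=
    Nat.exists_eq_succ_of_ne_zero (Fintype.card_pos_iff.mpr ⟨i⟩).ne'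
  rw [partialFracCoeff, prod_congr rfl hfactor, prod_mul_distrib, prod_mul_distrib,
    prod_mul_distrib, prod_const, prod_const, card_erase_of_mem (mem_univ i), card_univ, ← partialFracCoeff,
    ← mul_prod_erase univ _ (mem_univ i), hk, Nat.add_sub_cancel, div_eq_mul_inv, ← inv_pow,
    pow_succ]
  linear_combination (-1) ^ k * partialFracCoeff A i * (A i)⁻¹ ^ k * (A i)⁻¹ * hcancel

theorem sum_partialFracCoeff_mul_zpow_neg (hA : ∀ i, A i ≠ 0) (hinj : Function.Injective A)
    (d : ℕ) :
    ∑ i, partialFracCoeff A i * A i ^ (-((d + Fintype.card ι : ℕ) : ℤ)) =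
      -(-1) ^ Fintype.card ι * ((∏ j, (A j)⁻¹) * ∑ i, partialFracCoeff A⁻¹ i * A⁻¹ i ^ d) := by
  rw [mul_sum, mul_sum]
  refine sum_congr rfl fun i _ => ?_
  obtain ⟨k, hk⟩ : ∃ k, Fintype.card ι = k + 1 :=
    Nat.exists_eq_succ_of_ne_zero (Fintype.card_pos_iff.mpr ⟨i⟩).ne'
  have hsign : ((-1 : K) ^ k) * (-1) ^ k = 1 := by rw [← mul_pow]; norm_num
  have hinv := partialFracCoeff_inv hA hinj i
  rw [hk, Nat.add_sub_cancel] at hinv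
  rw [zpow_neg, zpow_natCast, hk, Pi.inv_apply]
  linear_combination (-1) ^ (k + 1) * (A i)⁻¹ ^ d * hinv -
    partialFracCoeff A i * (A i)⁻¹ ^ d * (A i ^ (k + 1))⁻¹ * hsign

end PartialFractions

/-- the formal-distribution identity
`∏ 1/(1-A_i x) − (−1)^n ∏ A_i⁻¹x⁻¹/(1-A_i⁻¹x⁻¹) = ∑_i (∏_{j≠i} A_i/(A_i−A_j)) δ(A_i x)`,
stated coefficientwise: for every `m : ℤ`, the coefficient of `x^m` of the left-hand
side (the first product expanded in nonnegative powers of `x`, the second in negative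
powers) equals `∑ i, (∏_{j≠i} A_i/(A_i−A_j)) A_i^m`. -/
theorem stmt4 (n : ℕ) (hn : 1 ≤ n) (A : Fin n → ℂ)
    (h0 : ∀ i, A i ≠ 0) (hinj : Function.Injective A) (m : ℤ) :
    (if 0 ≤ m then
        ∑ k ∈ Finset.Nat.antidiagonalTuple n m.toNat, ∏ i, A i ^ k i
      else 0)
      - (-1 : ℂ) ^ n *
        (if m + (n : ℤ) ≤ 0 then
            ∑ k ∈ Finset.Nat.antidiagonalTuple n ((-m).toNat - n), ∏ i,
              A i ^ (-(1 + (k i : ℤ)))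
          else 0)
      = ∑ i, (∏ j ∈ Finset.univ.erase i, A i / (A i - A j)) * A i ^ m := by
  have : NeZero n := ⟨by omega⟩
  change _ = ∑ i, partialFracCoeff A i * A i ^ m
  rcases le_or_gt 0 m with hm | hm
  · rw [if_pos hm, if_neg (by omega), mul_zero, sub_zero]
    lift m to ℕ using hm
    simp [sum_antidiagonalTuple_prod_pow h0 hinj]
  rcases le_or_gt (m + n) 0 with hmn | hmn
  · obtain ⟨d, rfl⟩ : ∃ d : ℕ, m = -((d + n : ℕ) : ℤ) := ⟨(-m).toNat - n, by omega⟩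
    have hprod : ∀ k : Fin n → ℕ,
        ∏ i, A i ^ (-(1 + (k i : ℤ))) = (∏ i, (A i)⁻¹) * ∏ i, A⁻¹ i ^ k i := fun k => by
        rw [← prod_mul_distrib]
        refine prod_congr rfl fun i _ => ?_
        rw [neg_add, zpow_add₀ (h0 i), zpow_neg_one, zpow_neg, zpow_natCast, Pi.inv_apply, inv_pow]
    have hneg := sum_partialFracCoeff_mul_zpow_neg h0 hinj d
    rw [Fintype.card_fin] at hneg
    rw [if_neg hm.not_ge, if_pos hmn, sum_congr rfl fun k _ => hprod k, ← mul_sum, neg_neg,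
      Int.toNat_natCast, Nat.add_sub_cancel,
      sum_antidiagonalTuple_prod_pow (A := A⁻¹) (fun i => inv_ne_zero (h0 i))
        (inv_injective.comp hinj), hneg]
    ring
  · rw [if_neg hm.not_ge, if_neg hmn.not_ge,
      sum_partialFracCoeff_mul_zpow_eq_zero h0 hinj (by rw [Fintype.card_fin]; omega) hm]
    simp
end

section
/- Let G be an abelian group with character σ: G → ℂ^×, R_σ the skew Laurent polynomial ring with basis t^m e^α and relation e^α t = σ(α) t e^α, and |σ| the order of the subgroup σ(G) of ℂ^× (set |σ|ℤ = 0 if |σ| = ∞). Let Λ_σ = {(m, α) ∈ ℤ × G : m ∈ |σ|ℤ, α ∈ ker σ}. Then the center Z_σ of R_σ has ℂ-basis {t^m e^α : (m, α) ∈ Λ_σ}, and the ℂ-span of the commutators [R_σ, R_σ] has ℂ-basis {t^m e^α : (m, α) ∉ Λ_σ}; consequently R_σ = [R_σ, R_σ] ⊕ Z_σ as ℂ-vector spaces. -/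
/-!
In an algebra with a basis `b` indexed by a commutative monoid and scalar structure constants,
`b p * b q = c p q • b (p + q)`, one has `[b p, b q] = (c p q - c q p) • b (p + q)`, and the
coefficient of `b (p + q)` in `[z, b q]` is `c p q - c q p` times that of `b p` in `z`. Hence the
center is spanned by the `b p` with `c p q = c q p` for all `q`, and the commutators are spanned by
the remaining monomials as soon as two monomials with central product commute and every
non-central monomial is the product of two non-commuting ones. For `R_σ` the ratio `c p q / c q p`
is `ε (p, q) = σ(α)^n / σ(β)^m`, multiplicative in `p` with `ε (q, q) = 1`, so
`ε (p + q, q) = ε (p, q)`; this gives both conditions (write a non-central `r` as `(r - q) + q`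
with `ε (r, q) ≠ 1`).
-/

open Submodule

theorem Module.Basis.mem_center_of_forall_commute {ι K A : Type*} [CommSemiring K] [Semiring A]
    [Algebra K A] (b : Module.Basis ι K A) {x : A} (h : ∀ i, b i * x = x * b i) :
    x ∈ Subalgebra.center K A :=
  Subalgebra.mem_center_iff.2 fun y =>
    LinearMap.congr_fun (b.ext (f₁ := LinearMap.mulRight K x) (f₂ := LinearMap.mulLeft K x) h) y

section MonomialAlgebra

variable {K M A : Type*} [Field K] [AddCancelCommMonoid M] [Ring A] [Algebra K A]

def centralIndices (c : M → M → K) : Set M := {p | ∀ q, c p q = c q p}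

variable (b : Module.Basis M K A) {c : M → M → K} (hmul : ∀ p q, b p * b q = c p q • b (p + q))
include hmul

theorem commutator_basis (p q : M) :
    b p * b q - b q * b p = (c p q - c q p) • b (p + q) := by
  rw [hmul, hmul, add_comm q p, sub_smul]

theorem repr_mul_basis (z : A) (p q : M) :
    b.repr (z * b q) (p + q) = c p q * b.repr z p := by
  have : (b.coord (p + q)).comp (LinearMap.mulRight K (b q)) = c p q • b.coord p :=
    b.ext fun p' => by
      by_cases h : p' = p
      · simp [h, hmul]
      · simp [hmul, h]
  exact LinearMap.congr_fun this z

theorem repr_basis_mul (z : A) (p q : M) :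
    b.repr (b q * z) (p + q) = c q p * b.repr z p := by
  have : (b.coord (p + q)).comp (LinearMap.mulLeft K (b q)) = c q p • b.coord p :=
    b.ext fun p' => by
      by_cases h : p' = p
      · simp [h, hmul, add_comm]
      · simp [hmul, h, add_comm q]
  exact LinearMap.congr_fun this z

theorem center_eq_span_centralIndices :
    Subalgebra.toSubmodule (Subalgebra.center K A) = span K (b '' centralIndices c) := by
  refine le_antisymm (fun z hz => ?_) (span_le.2 ?_)
  · rw [b.mem_span_image]
    intro p hp
    by_contra hpΛ
    obtain ⟨q, hq⟩ : ∃ q, c p q ≠ c q p := by simpa [centralIndices] using hpΛ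
    have hcomm : z * b q - b q * z = 0 := by
      rw [Subalgebra.mem_center_iff.1 ((Subalgebra.mem_toSubmodule _).1 hz) (b q), sub_self]
    have hcoeff := congrArg (b.repr · (p + q)) hcomm
    simp only [map_sub, Finsupp.sub_apply, repr_mul_basis b hmul, repr_basis_mul b hmul,
      ← sub_mul, map_zero, Finsupp.zero_apply, mul_eq_zero, sub_eq_zero, hq, false_or] at hcoeff
    exact Finsupp.mem_support_iff.1 hp hcoeff
  · rintro _ ⟨p, hp, rfl⟩
    refine b.mem_center_of_forall_commute fun q => ?_
    rw [hmul, hmul, hp q, add_comm]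

theorem span_commutators_le (hΛ : ∀ p q, p + q ∈ centralIndices c → c p q = c q p) :
    span K {z : A | ∃ x y : A, z = x * y - y * x} ≤ span K (b '' (centralIndices c)ᶜ) := by
  set N := span K (b '' (centralIndices c)ᶜ)
  have hbasis : ((LinearMap.mul K A - (LinearMap.mul K A).flip).compr₂ N.mkQ) = 0 :=
    b.ext fun p => b.ext fun q => (Submodule.Quotient.mk_eq_zero N).2 <| by
      change b p * b q - b q * b p ∈ N
      rw [commutator_basis b hmul]
      by_cases h : p + q ∈ centralIndices c
      · simp [hΛ p q h]
      · exact smul_mem _ _ (subset_span ⟨_, h, rfl⟩)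
  rw [span_le]
  rintro _ ⟨x, y, rfl⟩
  exact (Submodule.Quotient.mk_eq_zero N).1 (LinearMap.congr_fun₂ hbasis x y)

theorem span_image_compl_le_span_commutators
    (hdec : ∀ r ∉ centralIndices c, ∃ p q, p + q = r ∧ c p q ≠ c q p) :
    span K (b '' (centralIndices c)ᶜ) ≤ span K {z : A | ∃ x y : A, z = x * y - y * x} := by
  rw [span_le]
  rintro _ ⟨r, hr, rfl⟩
  obtain ⟨p, q, rfl, hpq⟩ := hdec r hr
  have hmem : (c p q - c q p) • b (p + q) ∈ span K {z : A | ∃ x y : A, z = x * y - y * x} :=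
    commutator_basis b hmul p q ▸ subset_span ⟨b p, b q, rfl⟩
  simpa [smul_smul, inv_mul_cancel₀ (sub_ne_zero.2 hpq)] using smul_mem _ (c p q - c q p)⁻¹ hmem

end MonomialAlgebra

section SkewLaurent

variable {G H : Type*} [CommGroup H] {σ : G → H}

def skewPairing (σ : G → H) (p q : ℤ × G) : H := σ p.2 ^ q.1 / σ q.2 ^ p.1

theorem skewPairing_self (p : ℤ × G) : skewPairing σ p p = 1 := div_self' _

variable [AddCommGroup G] (hσ : ∀ α β, σ (α + β) = σ α * σ β)
include hσ

theorem skewPairing_add_left (p p' q : ℤ × G) :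
    skewPairing σ (p + p') q = skewPairing σ p q * skewPairing σ p' q := by
  simp only [skewPairing, Prod.fst_add, Prod.snd_add, hσ, mul_zpow, zpow_add, div_mul_div_comm]

theorem skewPairing_add_left_self (p q : ℤ × G) :
    skewPairing σ (p + q) q = skewPairing σ p q := by
  rw [skewPairing_add_left hσ, skewPairing_self, mul_one]

theorem forall_skewPairing_eq_one_iff (p : ℤ × G) :
    (∀ q, skewPairing σ p q = 1) ↔ (∀ g, σ g ^ p.1 = 1) ∧ σ p.2 = 1 := by
  have hσ0 : σ 0 = 1 := by simpa using hσ 0 0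
  refine ⟨fun h => ⟨fun g => ?_, ?_⟩, fun ⟨h1, h2⟩ q => ?_⟩
  · simpa [skewPairing] using h (0, g)
  · simpa [skewPairing, hσ0] using h (1, 0)
  · simp [skewPairing, h1, h2]

end SkewLaurent

section SkewCoeff

variable {G R : Type*} [CommMonoid R]

def skewCoeff (σ : G → Rˣ) (p q : ℤ × G) : R := ↑(σ p.2 ^ q.1)

theorem skewCoeff_eq_swap_iff {σ : G → Rˣ} (p q : ℤ × G) :
    skewCoeff σ p q = skewCoeff σ q p ↔ skewPairing σ p q = 1 :=
  Units.val_inj.trans div_eq_one.symm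

variable [AddCommGroup G] {σ : G → Rˣ} (hσ : ∀ α β, σ (α + β) = σ α * σ β)
include hσ

theorem centralIndices_skewCoeff :
    centralIndices (skewCoeff σ) = {p : ℤ × G | (∀ g, σ g ^ p.1 = 1) ∧ σ p.2 = 1} :=
  Set.ext fun p =>
    (forall_congr' (skewCoeff_eq_swap_iff p)).trans (forall_skewPairing_eq_one_iff hσ p)

theorem skewCoeff_comm_of_add_mem_centralIndices (p q : ℤ × G)
    (h : p + q ∈ centralIndices (skewCoeff σ)) : skewCoeff σ p q = skewCoeff σ q p := by
  rw [skewCoeff_eq_swap_iff, ← skewPairing_add_left_self hσ, ← skewCoeff_eq_swap_iff]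
  exact h q

theorem exists_add_eq_skewCoeff_ne (r : ℤ × G) (hr : r ∉ centralIndices (skewCoeff σ)) :
    ∃ p q, p + q = r ∧ skewCoeff σ p q ≠ skewCoeff σ q p := by
  obtain ⟨q, hq⟩ : ∃ q, skewCoeff σ r q ≠ skewCoeff σ q r := by
    simpa [centralIndices] using hr
  refine ⟨r - q, q, sub_add_cancel r q, ?_⟩
  rwa [Ne, skewCoeff_eq_swap_iff, ← skewPairing_add_left_self hσ, sub_add_cancel,
    ← skewCoeff_eq_swap_iff]

end SkewCoeff

theorem stmt9_general (G : Type) [AddCommGroup G] (σ : G → ℂˣ)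
    (hσ : ∀ α β : G, σ (α + β) = σ α * σ β)
    (A : Type) [Ring A] [Algebra ℂ A]
    (b : Module.Basis (ℤ × G) ℂ A)
    (hmul : ∀ (m n : ℤ) (α β : G),
      b (m, α) * b (n, β) = ((σ α ^ n : ℂˣ) : ℂ) • b (m + n, α + β)) :
    Submodule.span ℂ
        (⇑b '' {p : ℤ × G | (∀ g : G, σ g ^ p.1 = 1) ∧ σ p.2 = 1})
      = Subalgebra.toSubmodule (Subalgebra.center ℂ A) ∧
    Submodule.span ℂ {z : A | ∃ x y : A, z = x * y - y * x}
      = Submodule.span ℂ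
          (⇑b '' {p : ℤ × G | (∀ g : G, σ g ^ p.1 = 1) ∧ σ p.2 = 1}ᶜ) ∧
    IsCompl (Submodule.span ℂ {z : A | ∃ x y : A, z = x * y - y * x})
      (Submodule.span ℂ
        (⇑b '' {p : ℤ × G | (∀ g : G, σ g ^ p.1 = 1) ∧ σ p.2 = 1})) := by
  have hmul' : ∀ p q, b p * b q = skewCoeff σ p q • b (p + q) := fun p q => hmul p.1 q.1 p.2 q.2
  have hcomm := le_antisymm
    (span_commutators_le b hmul' (skewCoeff_comm_of_add_mem_centralIndices hσ))
    (span_image_compl_le_span_commutators b hmul' (exists_add_eq_skewCoeff_ne hσ))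
  rw [← centralIndices_skewCoeff hσ, hcomm]
  exact ⟨(center_eq_span_centralIndices b hmul').symm, rfl,
    b.linearIndependent.isCompl_span_image b.span_eq isCompl_compl.symm⟩

/-- with `R_σ` the skew Laurent polynomial ring (modelled as a
ℂ-algebra `A` with basis `b (m,α) = t^m e^α` and multiplication
`(t^m e^α)(t^n e^β) = σ(α)^n t^{m+n} e^{α+β}`), let
`Λ_σ = {(m,α) : σ(g)^m = 1 for all g, and σ(α) = 1}` (note `m ∈ |σ|ℤ` is
equivalent to `σ(g)^m = 1` for all `g ∈ G`).  Then the span of the monomials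
`t^m e^α` with `(m,α) ∈ Λ_σ` is exactly the center of `R_σ`, the span of the
commutators `[R_σ, R_σ]` is the span of the monomials with `(m,α) ∉ Λ_σ`, and
`R_σ = [R_σ, R_σ] ⊕ Z_σ` as ℂ-vector spaces. -/
theorem stmt9 (G : Type) [AddCommGroup G] (σ : G → ℂˣ)
    (hσ : ∀ α β : G, σ (α + β) = σ α * σ β)
    (A : Type) [Ring A] [Algebra ℂ A]
    (b : Module.Basis (ℤ × G) ℂ A)
    (hone : b (0, (0 : G)) = 1)
    (hmul : ∀ (m n : ℤ) (α β : G),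
      b (m, α) * b (n, β) = ((σ α ^ n : ℂˣ) : ℂ) • b (m + n, α + β)) :
    Submodule.span ℂ
        (⇑b '' {p : ℤ × G | (∀ g : G, σ g ^ p.1 = 1) ∧ σ p.2 = 1})
      = Subalgebra.toSubmodule (Subalgebra.center ℂ A) ∧
    Submodule.span ℂ {z : A | ∃ x y : A, z = x * y - y * x}
      = Submodule.span ℂ
          (⇑b '' {p : ℤ × G | (∀ g : G, σ g ^ p.1 = 1) ∧ σ p.2 = 1}ᶜ) ∧
    IsCompl (Submodule.span ℂ {z : A | ∃ x y : A, z = x * y - y * x})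
      (Submodule.span ℂ
        (⇑b '' {p : ℤ × G | (∀ g : G, σ g ^ p.1 = 1) ∧ σ p.2 = 1})) :=
  stmt9_general G σ hσ A b hmul
end

section
/- Define on the centrally extended Lie algebra ĝl_ν(R_σ) = gl_ν(R_σ) ⊕ ℂc the bracket [E_{ij}t^m e^α, E_{kl}t^n e^β] = δ_{jk} σ(α)^n E_{il} t^{m+n} e^{α+β} − δ_{il} σ(β)^m E_{kj} t^{m+n} e^{α+β} + m δ_{il} δ_{jk} δ_{m+n,0} δ_{σ(α)σ(β),1} σ(α)^n c, with c central. Then this bracket satisfies the Jacobi identity (equivalently, the bilinear form ψ(E_{ij}t^m e^α, E_{kl}t^n e^β) = m δ_{il} δ_{jk} δ_{m+n,0} δ_{σ(α)σ(β),1} σ(α)^n defines a 2-cocycle on gl_ν(R_σ)). -/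
/-!
Write `D` for `t d/dt` (`t^m e^α ↦ m t^m e^α`) acting entrywise and `τ` for the sum of the
coefficients of the `t^0 e^γ` with `σ(γ) = 1`. Then `ψ(X, Y) = τ(tr(D X · Y))`, `D` is a
derivation, `τ ∘ tr` is a trace (`τ(ab) = τ(ba)` because `σ(β)^m = σ(α)^n` once `m + n = 0` and
`σ(α)σ(β) = 1`), and `τ ∘ tr ∘ D = 0`. For any such trace `T` and derivation `D`, skew-symmetry
is `T(D(xy)) = 0`, and the cyclic sum of `T(D[x, y] z)` is `2 T(D(xyz)) - 2 T(D(yxz)) = 0`.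
-/

open Matrix

section TraceDerivation

variable {M N : Type*} [NonUnitalRing M] [AddCommGroup N]

theorem trace_deriv_mul_swap (T : M →+ N) (D : M →+ M)
    (hT : ∀ x y, T (x * y) = T (y * x)) (hD : ∀ x y, D (x * y) = D x * y + x * D y)
    (hTD : ∀ x, T (D x) = 0) (x y : M) :
    T (D x * y) = -T (D y * x) := by
  rw [eq_neg_iff_add_eq_zero, hT (D y), ← map_add, ← hD, hTD]

theorem trace_deriv_commutator_mul_cyclic (T : M →+ N) (D : M →+ M)
    (hT : ∀ x y, T (x * y) = T (y * x)) (hD : ∀ x y, D (x * y) = D x * y + x * D y)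
    (hTD : ∀ x, T (D x) = 0) (x y z : M) :
    T (D (x * y - y * x) * z) + T (D (y * z - z * y) * x) + T (D (z * x - x * z) * y) = 0 := by
  have rotate : ∀ a b c : M, T (a * (b * c)) = T (b * (c * a)) := fun a b c => by
    rw [hT, mul_assoc]
  calc _ = 2 • T (D (x * (y * z))) - 2 • T (D (y * (x * z))) := by
        simp only [map_sub, hD, sub_mul, add_mul, mul_add, mul_assoc, map_add]
        -- bring the factor carrying `D` to the front of every product
        rw [rotate x (D y), rotate x y, rotate y (D z) x, rotate y (D x), rotate y x,
          rotate x (D z) y, rotate z (D y), rotate z (D x)]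
        abel
    _ = 0 := by rw [hTD, hTD, smul_zero, sub_zero]

end TraceDerivation

theorem zpow_eq_zpow_of_mul_eq_one {U : Type*} [CommGroup U] {u v : U} {m n : ℤ} (hmn : m + n = 0)
    (huv : u * v = 1) : u ^ n = v ^ m := by
  rw [eq_inv_of_mul_eq_one_right huv, _root_.inv_zpow', show -m = n by omega]

namespace Matrix

variable {n A N : Type*} [Fintype n] [NonUnitalRing A] [AddCommGroup N]

theorem map_trace_mul_comm (τ : A →+ N) (hτ : ∀ a c, τ (a * c) = τ (c * a))
    (X Y : Matrix n n A) : τ (trace (X * Y)) = τ (trace (Y * X)) := by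
  simp only [trace, diag, mul_apply, map_sum, hτ (X _ _)]
  exact Finset.sum_comm

theorem map_mul_of_leibniz (δ : A →+ A) (hδ : ∀ a c, δ (a * c) = δ a * c + a * δ c)
    (X Y : Matrix n n A) : (X * Y).map δ = X.map δ * Y + X * Y.map δ := by
  ext i j
  simp only [map_apply, mul_apply, add_apply, map_sum, hδ, Finset.sum_add_distrib]

theorem map_trace_map_eq_zero (τ : A →+ N) (δ : A →+ A) (hτδ : ∀ a, τ (δ a) = 0)
    (X : Matrix n n A) : τ (trace (X.map δ)) = 0 := by
  rw [← AddMonoidHom.map_trace, hτδ]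

theorem map_trace_map_mul_swap (τ : A →+ N) (δ : A →+ A) (hτ : ∀ a c, τ (a * c) = τ (c * a))
    (hδ : ∀ a c, δ (a * c) = δ a * c + a * δ c) (hτδ : ∀ a, τ (δ a) = 0) (X Y : Matrix n n A) :
    τ (trace (X.map δ * Y)) = -τ (trace (Y.map δ * X)) :=
  trace_deriv_mul_swap (τ.comp (traceAddMonoidHom n A)) δ.mapMatrix (map_trace_mul_comm τ hτ)
    (map_mul_of_leibniz δ hδ) (map_trace_map_eq_zero τ δ hτδ) X Y

theorem map_trace_map_commutator_mul_cyclic (τ : A →+ N) (δ : A →+ A)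
    (hτ : ∀ a c, τ (a * c) = τ (c * a)) (hδ : ∀ a c, δ (a * c) = δ a * c + a * δ c)
    (hτδ : ∀ a, τ (δ a) = 0) (X Y Z : Matrix n n A) :
    τ (trace ((X * Y - Y * X).map δ * Z)) + τ (trace ((Y * Z - Z * Y).map δ * X)) +
      τ (trace ((Z * X - X * Z).map δ * Y)) = 0 :=
  trace_deriv_commutator_mul_cyclic (τ.comp (traceAddMonoidHom n A)) δ.mapMatrix
    (map_trace_mul_comm τ hτ) (map_mul_of_leibniz δ hδ) (map_trace_map_eq_zero τ δ hτδ) X Y Z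

end Matrix

namespace SkewLaurent

open Module

open scoped Classical

variable {R G A : Type*} [CommRing R] [Ring A] [Algebra R A]

noncomputable def degreeDerivation (b : Basis (ℤ × G) R A) : A →ₗ[R] A :=
  b.constr R fun p => (p.1 : R) • b p

noncomputable def residueTrace (σ : G → Rˣ) (b : Basis (ℤ × G) R A) : A →ₗ[R] R :=
  b.constr R fun p => if p.1 = 0 ∧ σ p.2 = 1 then 1 else 0

variable {σ : G → Rˣ} {b : Basis (ℤ × G) R A}

theorem degreeDerivation_basis (p : ℤ × G) : degreeDerivation b (b p) = (p.1 : R) • b p :=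
  b.constr_basis R _ p

theorem residueTrace_basis (p : ℤ × G) :
    residueTrace σ b (b p) = if p.1 = 0 ∧ σ p.2 = 1 then 1 else 0 :=
  b.constr_basis R _ p

theorem residueTrace_degreeDerivation (a : A) : residueTrace σ b (degreeDerivation b a) = 0 := by
  have key : residueTrace σ b ∘ₗ degreeDerivation b = 0 := by
    refine b.ext fun ⟨m, α⟩ => ?_
    simp only [LinearMap.comp_apply, degreeDerivation_basis, map_smul, residueTrace_basis,
      LinearMap.zero_apply, smul_eq_mul]
    split_ifs with h
    · rw [h.1, Int.cast_zero, zero_mul]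
    · rw [mul_zero]
  exact LinearMap.congr_fun key a

variable [AddCommGroup G]

theorem degreeDerivation_mul
    (hmul : ∀ (m n : ℤ) (α β : G), b (m, α) * b (n, β) = ((σ α ^ n : Rˣ) : R) • b (m + n, α + β))
    (a c : A) :
    degreeDerivation b (a * c) = degreeDerivation b a * c + a * degreeDerivation b c := by
  have key : (LinearMap.mul R A).compr₂ (degreeDerivation b) =
      (LinearMap.mul R A).compl₁₂ (degreeDerivation b) LinearMap.id +
        (LinearMap.mul R A).compl₂ (degreeDerivation b) := by
    refine LinearMap.ext_basis b b fun ⟨m, α⟩ ⟨n, β⟩ => ?_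
    simp only [LinearMap.compr₂_apply, LinearMap.add_apply, LinearMap.compl₁₂_apply,
      LinearMap.compl₂_apply, LinearMap.id_apply, LinearMap.mul_apply', degreeDerivation_basis,
      LinearMap.smul_apply, hmul, map_smul, smul_smul, Int.cast_add]
    module
  exact LinearMap.congr_fun₂ key a c

theorem residueTrace_basis_mul_basis (hσ : ∀ α β : G, σ (α + β) = σ α * σ β)
    (hmul : ∀ (m n : ℤ) (α β : G), b (m, α) * b (n, β) = ((σ α ^ n : Rˣ) : R) • b (m + n, α + β))
    (m n : ℤ) (α β : G) :
    residueTrace σ b (b (m, α) * b (n, β)) =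
      if m + n = 0 ∧ σ α * σ β = 1 then ((σ α ^ n : Rˣ) : R) else 0 := by
  rw [hmul, map_smul, residueTrace_basis, hσ, smul_eq_mul, mul_ite, mul_one, mul_zero]

theorem residueTrace_mul_comm (hσ : ∀ α β : G, σ (α + β) = σ α * σ β)
    (hmul : ∀ (m n : ℤ) (α β : G), b (m, α) * b (n, β) = ((σ α ^ n : Rˣ) : R) • b (m + n, α + β))
    (a c : A) : residueTrace σ b (a * c) = residueTrace σ b (c * a) := by
  have key : (LinearMap.mul R A).compr₂ (residueTrace σ b) =
      (LinearMap.mul R A).flip.compr₂ (residueTrace σ b) := by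
    refine LinearMap.ext_basis b b fun ⟨m, α⟩ ⟨n, β⟩ => ?_
    simp only [LinearMap.compr₂_apply, LinearMap.flip_apply, LinearMap.mul_apply',
      residueTrace_basis_mul_basis hσ hmul, add_comm n, mul_comm (σ β)]
    split_ifs with h
    · rw [zpow_eq_zpow_of_mul_eq_one h.1 h.2]
    · rfl
  exact LinearMap.congr_fun₂ key a c

theorem residueTrace_trace_map_single_mul_single (hσ : ∀ α β : G, σ (α + β) = σ α * σ β)
    (hmul : ∀ (m n : ℤ) (α β : G), b (m, α) * b (n, β) = ((σ α ^ n : Rˣ) : R) • b (m + n, α + β))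
    {ι : Type*} [Fintype ι] [DecidableEq ι] (i j k l : ι) (m n : ℤ) (α β : G) :
    residueTrace σ b (trace ((single i j (b (m, α))).map (degreeDerivation b) *
        single k l (b (n, β)))) =
      if i = l ∧ j = k ∧ m + n = 0 ∧ σ α * σ β = 1 then (m : R) * ((σ α ^ n : Rˣ) : R) else 0 := by
  rw [map_single, trace_single_mul, single_apply, smul_eq_mul]
  by_cases hijkl : k = j ∧ l = i
  · rw [if_pos hijkl, degreeDerivation_basis, smul_mul_assoc, map_smul,
      residueTrace_basis_mul_basis hσ hmul, smul_eq_mul, mul_ite, mul_zero]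
    simp only [hijkl.1, hijkl.2, true_and]
  · rw [if_neg hijkl, mul_zero, map_zero, if_neg]
    rintro ⟨rfl, rfl, -⟩
    exact hijkl ⟨rfl, rfl⟩

end SkewLaurent

open SkewLaurent

theorem stmt12_general (ν : ℕ) (G : Type) [AddCommGroup G] (σ : G → ℂˣ)
    (hσ : ∀ α β : G, σ (α + β) = σ α * σ β)
    (A : Type) [Ring A] [Algebra ℂ A]
    (b : Module.Basis (ℤ × G) ℂ A)
    (hmul : ∀ (m n : ℤ) (α β : G),
      b (m, α) * b (n, β) = ((σ α ^ n : ℂˣ) : ℂ) • b (m + n, α + β))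
    (Ψ : Matrix (Fin ν) (Fin ν) A →ₗ[ℂ] Matrix (Fin ν) (Fin ν) A →ₗ[ℂ] ℂ)
    (hΨ : ∀ (i j k l : Fin ν) (m n : ℤ) (α β : G),
      Ψ (Matrix.single i j (b (m, α)))
          (Matrix.single k l (b (n, β)))
        = if i = l ∧ j = k ∧ m + n = 0 ∧ ((σ α : ℂ) * (σ β : ℂ)) = 1
          then (m : ℂ) * ((σ α : ℂ) ^ n) else 0) :
    (∀ X Y, Ψ X Y = -Ψ Y X) ∧
    (∀ X Y Z, Ψ (X * Y - Y * X) Z + Ψ (Y * Z - Z * Y) X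
        + Ψ (Z * X - X * Z) Y = 0) := by
  have hΨ_eq : ∀ X Y, Ψ X Y = residueTrace σ b (trace (X.map (degreeDerivation b) * Y)) := by
    have : Ψ = ((LinearMap.mul ℂ _).compl₁₂ (degreeDerivation b).mapMatrix LinearMap.id).compr₂
        (residueTrace σ b ∘ₗ traceLinearMap (Fin ν) ℂ A) :=
      LinearMap.ext_basis (b.matrix _ _) (b.matrix _ _) fun ⟨i, j, m, α⟩ ⟨k, l, n, β⟩ => by
        simp only [Module.Basis.matrix_apply, hΨ, LinearMap.compr₂_apply, LinearMap.compl₁₂_apply,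
          LinearMap.id_apply, LinearMap.mul_apply', LinearMap.comp_apply, traceLinearMap_apply,
          LinearMap.mapMatrix_apply, residueTrace_trace_map_single_mul_single hσ hmul,
          ← Units.val_mul, Units.val_eq_one, Units.val_zpow_eq_zpow_val]
    exact fun X Y => LinearMap.congr_fun₂ this X Y
  have hτ := residueTrace_mul_comm hσ hmul
  have hδ := degreeDerivation_mul hmul
  have hτδ : ∀ a, residueTrace σ b (degreeDerivation b a) = 0 := residueTrace_degreeDerivation
  refine ⟨fun X Y => ?_, fun X Y Z => ?_⟩
  · simp only [hΨ_eq]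
    exact map_trace_map_mul_swap (residueTrace σ b).toAddMonoidHom
      (degreeDerivation b).toAddMonoidHom hτ hδ hτδ X Y
  · simp only [hΨ_eq]
    exact map_trace_map_commutator_mul_cyclic (residueTrace σ b).toAddMonoidHom
      (degreeDerivation b).toAddMonoidHom hτ hδ hτδ X Y Z

/-- the bilinear form
`ψ(E_{ij}t^m e^α, E_{kl}t^n e^β) = m δ_{il} δ_{jk} δ_{m+n,0} δ_{σ(α)σ(β),1} σ(α)^n`
is a 2-cocycle on `gl_ν(R_σ)` (`R_σ` modelled as a ℂ-algebra `A` with basis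
`b (m,α) = t^m e^α` and multiplication `(t^m e^α)(t^n e^β) = σ(α)^n t^{m+n} e^{α+β}`);
equivalently, the bracket on `ĝl_ν(R_σ) = gl_ν(R_σ) ⊕ ℂc` given in (3.1)
satisfies the Jacobi identity. -/
theorem stmt12 (ν : ℕ) (G : Type) [AddCommGroup G] (σ : G → ℂˣ)
    (hσ : ∀ α β : G, σ (α + β) = σ α * σ β)
    (A : Type) [Ring A] [Algebra ℂ A]
    (b : Module.Basis (ℤ × G) ℂ A)
    (hone : b (0, (0 : G)) = 1)
    (hmul : ∀ (m n : ℤ) (α β : G),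
      b (m, α) * b (n, β) = ((σ α ^ n : ℂˣ) : ℂ) • b (m + n, α + β))
    (Ψ : Matrix (Fin ν) (Fin ν) A →ₗ[ℂ] Matrix (Fin ν) (Fin ν) A →ₗ[ℂ] ℂ)
    (hΨ : ∀ (i j k l : Fin ν) (m n : ℤ) (α β : G),
      Ψ (Matrix.single i j (b (m, α)))
          (Matrix.single k l (b (n, β)))
        = if i = l ∧ j = k ∧ m + n = 0 ∧ ((σ α : ℂ) * (σ β : ℂ)) = 1
          then (m : ℂ) * ((σ α : ℂ) ^ n) else 0) :
    (∀ X Y, Ψ X Y = -Ψ Y X) ∧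
    (∀ X Y Z, Ψ (X * Y - Y * X) Z + Ψ (Y * Z - Z * Y) X
        + Ψ (Z * X - X * Z) Y = 0) :=
  stmt12_general ν G σ hσ A b hmul Ψ hΨ
end

section
/- For ρ = ±1 set w_{2j-1}(ρ) = 1 + i·ρ·e^{ε̄_{2j-1}} and w_{2j}(ρ) = 1 + ρ·e^{ε̄_{2j}} in the twisted group algebra ℂ[Γ̄], and for ρ_1, ..., ρ_ν ∈ {±1} set w(ρ_1,...,ρ_ν) = ∏_{j=1}^ν w_j(ρ_j) (product in increasing order of j). Then for odd j, e^{ε̄_j} · w(ρ_1,...,ρ_ν) = i·ρ_j · w(−ρ_1,...,−ρ_j, ρ_{j+1},...,ρ_ν), and for even j, e^{ε̄_j} · w(ρ_1,...,ρ_ν) = ρ_j · w(−ρ_1,...,−ρ_{j-1}, ρ_j,...,ρ_ν). -/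
open Finset

/-- The bimultiplicative two-cocycle `ε` on `Γ = ℤ^ν`, with
`ε(ε_i, ε_j) = 1` if `i ≤ j` and `−1` if `i > j`. -/
noncomputable def eps (ν : ℕ) (α β : Fin ν → ℤ) : ℂ :=
  ∏ i, ∏ j, (if i ≤ j then (1 : ℂ) else -1) ^ (α i * β j)

/-- The image `ε̄_j` of the `j`-th standard basis vector in `Γ/2Γ = (ℤ/2)^ν`. -/
def uvec (ν : ℕ) (j : Fin ν) : Fin ν → ZMod 2 := fun i => if i = j then 1 else 0

/-- `w_j(ρ)`: with 0-based indexing, `w_j(ρ) = 1 + iρ e^{ε̄_j}` for `j` in an odd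
(1-based) position and `1 + ρ e^{ε̄_j}` for `j` in an even (1-based) position. -/
noncomputable def wfac (ν : ℕ) (A : Type) [Ring A] [Algebra ℂ A]
    (e : (Fin ν → ZMod 2) → A) (j : Fin ν) (r : ℂ) : A :=
  if (j : ℕ) % 2 = 0 then 1 + (Complex.I * r) • e (uvec ν j)
  else 1 + r • e (uvec ν j)

/-- `w(ρ_1,…,ρ_ν) = ∏_{j=1}^ν w_j(ρ_j)`, the product taken in increasing order. -/
noncomputable def wprod (ν : ℕ) (A : Type) [Ring A] [Algebra ℂ A]
    (e : (Fin ν → ZMod 2) → A) (ρ : Fin ν → ℂ) : A :=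
  (List.ofFn fun j => wfac ν A e j (ρ j)).prod

/-! The generators `u_k = e^{ε̄_k}` square to `1` and pairwise anticommute, since
`ε(ε_k, ε_l) ε(ε_l, ε_k) = -1` for `k ≠ l`. Hence `u_j` moves left past each factor
`1 + c u_k` with `k < j` at the cost of `c ↦ -c`, absorbs its own factor through
`u_j (1 + c u_j) = c (1 + c⁻¹ u_j)` (as `c² = ±1`), and leaves the factors with `k > j` alone. -/
theorem mul_prod_ofFn_eq_smul_prod_ofFn {R A : Type*} [CommSemiring R] [Semiring A]
    [Algebra R A] {n : ℕ} (x : A) (f g : Fin n → A) (c : R) (j : Fin n)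
    (hlt : ∀ k < j, x * f k = g k * x) (hj : x * f j = c • g j)
    (hgt : ∀ k, j < k → f k = g k) :
    x * (List.ofFn f).prod = c • (List.ofFn g).prod := by
  induction n with
  | zero => exact j.elim0
  | succ n ih =>
    simp only [List.ofFn_succ, List.prod_cons]
    cases j using Fin.cases with
    | zero =>
      have htail : (fun k : Fin n => f k.succ) = fun k => g k.succ :=
        funext fun k => hgt k.succ (Fin.succ_pos k)
      rw [← mul_assoc, hj, htail, smul_mul_assoc]
    | succ j =>
      have htail := ih (fun k => f k.succ) (fun k => g k.succ) j
        (fun k hk => hlt k.succ (Fin.succ_lt_succ_iff.mpr hk)) hj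
        (fun k hk => hgt k.succ (Fin.succ_lt_succ_iff.mpr hk))
      rw [← mul_assoc, hlt 0 (Fin.succ_pos j), mul_assoc, htail, mul_smul_comm]

section Clifford

variable {R A : Type*} [CommRing R] [Ring A] [Algebra R A]

theorem mul_one_add_smul_of_anticomm {u v : A} (h : u * v = -(v * u)) (c : R) :
    u * (1 + c • v) = (1 + (-c) • v) * u := by
  rw [mul_add, add_mul, mul_one, one_mul, mul_smul_comm, h, smul_mul_assoc, neg_smul, smul_neg]

theorem mul_one_add_smul_self_of_mul_self {u : A} (hu : u * u = 1) {c d : R} (hcd : c * d = 1) :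
    u * (1 + c • u) = c • (1 + d • u) := by
  rw [mul_add, mul_one, mul_smul_comm, hu, smul_add, smul_smul, hcd, one_smul, add_comm]

end Clifford

theorem eps_single (ν : ℕ) (k l : Fin ν) :
    eps ν (Pi.single k 1) (Pi.single l 1) = if k ≤ l then 1 else -1 := by
  unfold eps
  rw [Finset.prod_eq_single k (fun b _ hb => Finset.prod_eq_one fun c _ => by simp [hb])
    (by simp), Finset.prod_eq_single l (fun c _ hc => by simp [hc]) (by simp)]
  simp

theorem cast_single_eq_uvec (ν : ℕ) (k : Fin ν) :
    (fun i => ((Pi.single k 1 : Fin ν → ℤ) i : ZMod 2)) = uvec ν k := by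
  funext i
  by_cases hik : i = k <;> simp [uvec, hik]

section Generators

variable {ν : ℕ} {A : Type} [Ring A] [Algebra ℂ A] {e : (Fin ν → ZMod 2) → A}

theorem e_uvec_mul_self (hone : e 0 = 1)
    (hmul : ∀ α β : Fin ν → ℤ,
      e (fun i => (α i : ZMod 2)) * e (fun i => (β i : ZMod 2))
        = eps ν α β • e (fun i => ((α i + β i : ℤ) : ZMod 2))) (k : Fin ν) :
    e (uvec ν k) * e (uvec ν k) = 1 := by
  have h := hmul (Pi.single k 1) (Pi.single k 1)
  have hsum : (fun i => (((Pi.single k 1 : Fin ν → ℤ) i + (Pi.single k 1 : Fin ν → ℤ) i : ℤ)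
      : ZMod 2)) = 0 := by
    funext i
    by_cases hik : i = k <;> simp [hik]
    decide
  rwa [cast_single_eq_uvec, eps_single, if_pos le_rfl, one_smul, hsum, hone] at h

theorem e_uvec_anticomm
    (hmul : ∀ α β : Fin ν → ℤ,
      e (fun i => (α i : ZMod 2)) * e (fun i => (β i : ZMod 2))
        = eps ν α β • e (fun i => ((α i + β i : ℤ) : ZMod 2))) {k l : Fin ν} (hkl : k ≠ l) :
    e (uvec ν k) * e (uvec ν l) = -(e (uvec ν l) * e (uvec ν k)) := by
  have hkl' := hmul (Pi.single k 1) (Pi.single l 1)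
  have hlk := hmul (Pi.single l 1) (Pi.single k 1)
  simp only [cast_single_eq_uvec, eps_single] at hkl' hlk
  rw [hkl', hlk, ← neg_smul]
  simp only [add_comm ((Pi.single l 1 : Fin ν → ℤ) _)]
  congr 1
  rcases hkl.lt_or_gt with h | h <;> simp [h.le, not_le.mpr h]

theorem e_uvec_mul_wfac_of_anticomm {j k : Fin ν}
    (hanti : e (uvec ν j) * e (uvec ν k) = -(e (uvec ν k) * e (uvec ν j))) (r : ℂ) :
    e (uvec ν j) * wfac ν A e k r = wfac ν A e k (-r) * e (uvec ν j) := by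
  unfold wfac
  split
  · rw [mul_neg, mul_one_add_smul_of_anticomm hanti]
  · exact mul_one_add_smul_of_anticomm hanti r

end Generators

/-- in the twisted group algebra `ℂ[Γ̄]` (with `e^0 = 1` and
`e^ᾱ e^β̄ = ε(α,β) e^{α+β}`), for `j` in an odd (1-based) position
`e^{ε̄_j} w(ρ) = iρ_j w(−ρ_1,…,−ρ_j, ρ_{j+1},…,ρ_ν)`, and for `j` in an even
(1-based) position `e^{ε̄_j} w(ρ) = ρ_j w(−ρ_1,…,−ρ_{j-1}, ρ_j,…,ρ_ν)`. -/
theorem stmt13 (ν : ℕ) (A : Type) [Ring A] [Algebra ℂ A]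
    (e : (Fin ν → ZMod 2) → A)
    (hone : e 0 = 1)
    (hmul : ∀ α β : Fin ν → ℤ,
      e (fun i => (α i : ZMod 2)) * e (fun i => (β i : ZMod 2))
        = eps ν α β • e (fun i => ((α i + β i : ℤ) : ZMod 2)))
    (ρ : Fin ν → ℂ) (hρ : ∀ j, ρ j = 1 ∨ ρ j = -1) (j : Fin ν) :
    ((j : ℕ) % 2 = 0 →
      e (uvec ν j) * wprod ν A e ρ
        = (Complex.I * ρ j) • wprod ν A e (fun i => if i ≤ j then -ρ i else ρ i)) ∧
    ((j : ℕ) % 2 = 1 →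
      e (uvec ν j) * wprod ν A e ρ
        = ρ j • wprod ν A e (fun i => if i < j then -ρ i else ρ i)) := by
  have hsq := e_uvec_mul_self hone hmul j
  have hpass : ∀ k < j, e (uvec ν j) * wfac ν A e k (ρ k) = wfac ν A e k (-ρ k) * e (uvec ν j) :=
    fun k hk => e_uvec_mul_wfac_of_anticomm (e_uvec_anticomm hmul hk.ne') (ρ k)
  have hρsq : ρ j * ρ j = 1 := by rcases hρ j with h | h <;> simp [h]
  refine ⟨fun hj => ?_, fun hj => ?_⟩
  · refine mul_prod_ofFn_eq_smul_prod_ofFn _ _ _ _ j (fun k hk => ?_) ?_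
      (fun k hk => by simp [not_le.mpr hk])
    · simpa [hk.le] using hpass k hk
    · have hI : Complex.I * ρ j * (Complex.I * -ρ j) = 1 := by
        linear_combination hρsq - ρ j * ρ j * Complex.I_mul_I
      simpa [wfac, hj] using mul_one_add_smul_self_of_mul_self hsq hI
  · refine mul_prod_ofFn_eq_smul_prod_ofFn _ _ _ _ j (fun k hk => ?_) ?_
      (fun k hk => by simp [not_lt.mpr hk.le])
    · simpa [hk] using hpass k hk
    · simpa [wfac, hj] using mul_one_add_smul_self_of_mul_self hsq hρsq
end

section
/- The 2^ν elements w(ρ_1,...,ρ_ν) = ∏_{j=1}^ν w_j(ρ_j), for (ρ_1,...,ρ_ν) ∈ {±1}^ν, where w_{2j-1}(ρ) = 1 + i ρ e^{ε̄_{2j-1}} and w_{2j}(ρ) = 1 + ρ e^{ε̄_{2j}}, form a ℂ-basis of the twisted group algebra ℂ[Γ̄] of (ℤ/2ℤ)^ν. -/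
/-!
Since `ε(ε̄_i, ε̄_j) = 1` for `i ≤ j`, the ordered product expands as
`w(ρ) = ∑_S c_S ρ^S e^{1_S}` over subsets `S`, where `ρ^S = ∏_{j ∈ S} ρ_j` and
`c_S = ∏_{j ∈ S} c_j` with `c_j ∈ {i, 1}`. Orthogonality of the characters `ρ ↦ ρ^S`
of `{±1}^ν` gives `∑_ρ ρ^T w(ρ) = 2^ν c_T e^{1_T}`, so the `w(ρ)` span `ℂ[Γ̄]`;
as there are `2^ν = dim ℂ[Γ̄]` of them, they are also linearly independent.
-/

open Finset

lemma eps_eq_one_of_le {ν : ℕ} {α β : Fin ν → ℤ}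
    (h : ∀ i j, α i ≠ 0 → β j ≠ 0 → i ≤ j) : eps ν α β = 1 := by
  refine prod_eq_one fun i _ => prod_eq_one fun j _ => ?_
  by_cases hα : α i = 0
  · simp [hα]
  by_cases hβ : β j = 0
  · simp [hβ]
  simp [h i j hα hβ]

namespace Finset

def zmodIndicator {ν : ℕ} (S : Finset (Fin ν)) : Fin ν → ZMod 2 :=
  fun i => if i ∈ S then 1 else 0

lemma zmodIndicator_filter_eq_one {ν : ℕ} (v : Fin ν → ZMod 2) :
    (univ.filter fun i => v i = 1).zmodIndicator = v := by
  funext i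
  simp only [zmodIndicator, mem_filter, mem_univ, true_and]
  split_ifs with h
  · exact h.symm
  · revert h; generalize v i = x; revert x; decide

lemma zmodIndicator_empty {ν : ℕ} : (∅ : Finset (Fin ν)).zmodIndicator = 0 := by
  funext i; simp [zmodIndicator]

end Finset

noncomputable def wcoeff (ν : ℕ) (j : Fin ν) : ℂ := if (j : ℕ) % 2 = 0 then Complex.I else 1

lemma wcoeff_ne_zero (ν : ℕ) (j : Fin ν) : wcoeff ν j ≠ 0 := by
  unfold wcoeff; split_ifs <;> simp

noncomputable def signOf (b : Bool) : ℂ := if b then 1 else -1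

lemma sum_prod_signOf_mul_prod_signOf {ν : ℕ} (S T : Finset (Fin ν)) :
    ∑ ρ : Fin ν → Bool, (∏ j ∈ S, signOf (ρ j)) * ∏ j ∈ T, signOf (ρ j)
      = if S = T then 2 ^ ν else 0 := by
  have hfactor (j : Fin ν) :
      ∑ b : Bool, (if j ∈ S then signOf b else 1) * (if j ∈ T then signOf b else 1)
        = if j ∈ S ↔ j ∈ T then 2 else 0 := by
    by_cases hS : j ∈ S <;> by_cases hT : j ∈ T <;> norm_num [hS, hT, signOf]
  have hextend (U : Finset (Fin ν)) (ρ : Fin ν → Bool) :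
      ∏ j ∈ U, signOf (ρ j) = ∏ j, if j ∈ U then signOf (ρ j) else 1 := by
    rw [prod_ite_mem, univ_inter]
  simp_rw [hextend, ← prod_mul_distrib]
  rw [← Fintype.prod_sum fun j (b : Bool) =>
      (if j ∈ S then signOf b else 1) * (if j ∈ T then signOf b else 1),
    prod_congr rfl fun j _ => hfactor j, prod_ite_zero]
  simp [Finset.ext_iff]

section TwistedAlgebra

variable (ν : ℕ) (A : Type) [Ring A] [Algebra ℂ A] (e : (Fin ν → ZMod 2) → A)

def IsEpsTwisted : Prop :=
  ∀ α β : Fin ν → ℤ,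
    e (fun i => (α i : ZMod 2)) * e (fun i => (β i : ZMod 2))
      = eps ν α β • e (fun i => ((α i + β i : ℤ) : ZMod 2))

variable {ν A e}

lemma IsEpsTwisted.mul_zmodIndicator (hmul : IsEpsTwisted ν A e) {j : Fin ν}
    {S : Finset (Fin ν)} (hS : ∀ i ∈ S, j < i) :
    e (uvec ν j) * e S.zmodIndicator = e (insert j S).zmodIndicator := by
  have hj : j ∉ S := fun h => lt_irrefl j (hS j h)
  have h := hmul (fun i => if i = j then 1 else 0) (fun i => if i ∈ S then 1 else 0)
  have hj_cast : (fun i => ((if i = j then 1 else 0 : ℤ) : ZMod 2)) = uvec ν j := by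
    funext i; by_cases hi : i = j <;> simp [uvec, hi]
  have hS_cast : (fun i => ((if i ∈ S then 1 else 0 : ℤ) : ZMod 2)) = S.zmodIndicator := by
    funext i; by_cases hi : i ∈ S <;> simp [zmodIndicator, hi]
  have hsum_cast : (fun i => (((if i = j then 1 else 0) + (if i ∈ S then 1 else 0) : ℤ) : ZMod 2))
      = (insert j S).zmodIndicator := by
    funext i; by_cases hi : i = j <;> simp [zmodIndicator, hi, hj]
  have heps : eps ν (fun i => if i = j then 1 else 0) (fun i => if i ∈ S then 1 else 0) = 1 := by
    refine eps_eq_one_of_le fun i l hi hl => ?_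
    simp only [ne_eq, ite_eq_right_iff, one_ne_zero, imp_false, not_not] at hi hl
    exact hi ▸ (hS l hl).le
  rwa [hj_cast, hS_cast, hsum_cast, heps, one_smul] at h

lemma wfac_eq (j : Fin ν) (r : ℂ) : wfac ν A e j r = 1 + (wcoeff ν j * r) • e (uvec ν j) := by
  unfold wfac wcoeff; split_ifs <;> simp

lemma IsEpsTwisted.prod_map_wfac (hone : e 0 = 1) (hmul : IsEpsTwisted ν A e) (ρ : Fin ν → ℂ)
    (l : List (Fin ν)) (hl : l.Pairwise (· < ·)) :
    (l.map fun j => wfac ν A e j (ρ j)).prod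
      = ∑ S ∈ l.toFinset.powerset, (∏ j ∈ S, wcoeff ν j * ρ j) • e S.zmodIndicator := by
  induction l with
  | nil => simp [zmodIndicator_empty, hone]
  | cons j l ih =>
    obtain ⟨hjl, hl⟩ := List.pairwise_cons.1 hl
    have hj : j ∉ l.toFinset := fun h => lt_irrefl j (hjl j (List.mem_toFinset.1 h))
    rw [List.map_cons, List.prod_cons, ih hl, wfac_eq, List.toFinset_cons,
      sum_powerset_insert hj, add_mul, one_mul, mul_sum]
    congr 1
    refine sum_congr rfl fun S hS => ?_
    have hSl : ∀ i ∈ S, j < i := fun i hi =>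
      hjl i (List.mem_toFinset.1 (mem_powerset.1 hS hi))
    rw [smul_mul_smul_comm, hmul.mul_zmodIndicator hSl,
      prod_insert fun h => lt_irrefl j (hSl j h)]

lemma IsEpsTwisted.wprod_eq_sum (hone : e 0 = 1) (hmul : IsEpsTwisted ν A e) (ρ : Fin ν → ℂ) :
    wprod ν A e ρ = ∑ S : Finset (Fin ν), (∏ j ∈ S, wcoeff ν j * ρ j) • e S.zmodIndicator := by
  rw [wprod, List.ofFn_eq_map, hmul.prod_map_wfac hone ρ _ (List.pairwise_lt_finRange ν),
    List.toFinset_finRange, powerset_univ]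

lemma IsEpsTwisted.sum_signOf_smul_wprod (hone : e 0 = 1) (hmul : IsEpsTwisted ν A e)
    (T : Finset (Fin ν)) :
    ∑ ρ : Fin ν → Bool, (∏ j ∈ T, signOf (ρ j)) • wprod ν A e (fun j => signOf (ρ j))
      = (2 ^ ν * ∏ j ∈ T, wcoeff ν j) • e T.zmodIndicator := by
  have hcoeff (S : Finset (Fin ν)) :
      ∑ ρ : Fin ν → Bool, (∏ j ∈ T, signOf (ρ j)) * ∏ j ∈ S, wcoeff ν j * signOf (ρ j)
        = if T = S then 2 ^ ν * ∏ j ∈ S, wcoeff ν j else 0 := by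
    simp_rw [prod_mul_distrib, mul_left_comm _ (∏ j ∈ S, wcoeff ν j), ← mul_sum,
      sum_prod_signOf_mul_prod_signOf, mul_ite, mul_zero, mul_comm]
  simp_rw [hmul.wprod_eq_sum hone, smul_sum, smul_smul]
  rw [sum_comm]
  simp_rw [← sum_smul, hcoeff, ite_smul, zero_smul, sum_ite_eq, mem_univ, if_true]

lemma IsEpsTwisted.mem_span_wprod (hone : e 0 = 1) (hmul : IsEpsTwisted ν A e)
    (T : Finset (Fin ν)) :
    e T.zmodIndicator ∈ Submodule.span ℂ
      (Set.range fun ρ : Fin ν → Bool => wprod ν A e (fun j => signOf (ρ j))) := by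
  have hc : (2 ^ ν * ∏ j ∈ T, wcoeff ν j : ℂ) ≠ 0 :=
    mul_ne_zero (pow_ne_zero _ two_ne_zero) (prod_ne_zero_iff.2 fun j _ => wcoeff_ne_zero ν j)
  rw [← inv_smul_smul₀ hc (e _), ← hmul.sum_signOf_smul_wprod hone]
  exact Submodule.smul_mem _ _ (Submodule.sum_mem _ fun ρ _ =>
    Submodule.smul_mem _ _ (Submodule.subset_span ⟨ρ, rfl⟩))

end TwistedAlgebra

/-- the `2^ν` elements `w(ρ_1,…,ρ_ν)`, `(ρ_1,…,ρ_ν) ∈ {±1}^ν`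
(sign patterns encoded by `Fin ν → Bool`), form a ℂ-basis of the twisted group
algebra `ℂ[Γ̄]` of `(ℤ/2)^ν`. -/
theorem stmt15 (ν : ℕ) (A : Type) [Ring A] [Algebra ℂ A]
    (e : (Fin ν → ZMod 2) → A)
    (bE : Module.Basis (Fin ν → ZMod 2) ℂ A) (hbE : ∀ v, bE v = e v)
    (hone : e 0 = 1)
    (hmul : ∀ α β : Fin ν → ℤ,
      e (fun i => (α i : ZMod 2)) * e (fun i => (β i : ZMod 2))
        = eps ν α β • e (fun i => ((α i + β i : ℤ) : ZMod 2))) :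
    LinearIndependent ℂ
      (fun ρ : Fin ν → Bool =>
        wprod ν A e (fun j => if ρ j then 1 else -1)) ∧
    Submodule.span ℂ
        (Set.range fun ρ : Fin ν → Bool =>
          wprod ν A e (fun j => if ρ j then 1 else -1)) = ⊤ := by
  have hspan : Submodule.span ℂ
      (Set.range fun ρ : Fin ν → Bool => wprod ν A e (fun j => signOf (ρ j))) = ⊤ := by
    rw [eq_top_iff, ← bE.span_eq, Submodule.span_le]
    rintro _ ⟨v, rfl⟩
    rw [hbE, ← Finset.zmodIndicator_filter_eq_one v]
    exact IsEpsTwisted.mem_span_wprod hone hmul _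
  refine ⟨linearIndependent_of_top_le_span_of_card_eq_finrank hspan.ge ?_, hspan⟩
  simp [Module.finrank_eq_card_basis bE]
end
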